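/- arXiv:1312.5463 — 4 statements merged into one kernel-verified Lean document; each statement's English description precedes it below -/
import Mathlib

section
/- Let N ≥ 3, ε > 0, γ, β ∈ ℝ, let U : ℝ^N → ℝ be C¹ with U, |∇U| and |x|U(x) in L²(ℝ^N), let σ = (a,ξ,θ) ∈ ℝ^N×ℝ^N×ℝ, and let w ∈ L²(ℝ^N, ℂ). Define w̃(x) := ε^{−γ} e^{−(i/ε)((1/2)ε^β x·ξ + θ)} w(a + ε^β x). Then: (i) for j = 1,…,N, ω(w, z^ε_{j,σ}) = ε^{2γ+β(N−1)} ω(w̃, z_{j,0}) − (1/2) ε^{2γ+βN−1} ξ_j ω(w̃, z_{2N+1,0}); (ii) for j = N+1,…,2N, ω(w, z^ε_{j,σ}) = ε^{2γ+β(N+1)−1} ω(w̃, z_{j,0}) + (1/2) ε^{2γ+βN−1} a_{j−N} ω(w̃, z_{2N+1,0}); (iii) ω(w, z^ε_{2N+1,σ}) = ε^{2γ+βN−1} ω(w̃, z_{2N+1,0}). -/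
/-! Substituting `x = a + ε^β y` costs the Jacobian `ε^{βN}` and turns each tangent vector
`z^ε_{k,σ}` into the phase of `U_σ` times a real combination of `z_{k,0}` and `z_{2N+1,0}`.
That phase cancels the conjugate phase built into `w̃`, so every pairing becomes `ε^{γ+βN}` times
a real linear combination of pairings with `w̃`, which splits because all factors lie in `L²`. -/

open MeasureTheory Real Filter
open scoped BigOperators ENNReal

noncomputable section

/-- Euclidean space `ℝ^N`. -/
abbrev Esp (N : ℕ) := EuclideanSpace ℝ (Fin N)

namespace NLS

variable {N : ℕ}

/-- partial derivative in the `j`-th coordinate direction (real valued). -/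
def pd (j : Fin N) (g : Esp N → ℝ) (x : Esp N) : ℝ :=
  fderiv ℝ g x (EuclideanSpace.single j 1)

/-- partial derivative in the `j`-th coordinate direction (complex valued). -/
def pdC (j : Fin N) (g : Esp N → ℂ) (x : Esp N) : ℂ :=
  fderiv ℝ g x (EuclideanSpace.single j 1)

/-- Laplacian of a real valued function. -/
def lapR (g : Esp N → ℝ) (x : Esp N) : ℝ := ∑ j, pd j (pd j g) x

/-- Laplacian of a complex valued function. -/
def lapC (g : Esp N → ℂ) (x : Esp N) : ℂ := ∑ j, pdC j (pdC j g) x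

/-- gradient of a real valued function, as a vector of `ℝ^N`. -/
def grad (g : Esp N → ℝ) (x : Esp N) : Esp N :=
  (EuclideanSpace.equiv (Fin N) ℝ).symm fun j => pd j g x

/-- the symplectic pairing `ω(f,g) = Im ∫ f · conj g`. -/
def symp (f g : Esp N → ℂ) : ℝ := (∫ x, f x * (starRingEnd ℂ) (g x)).im

/-- `L²` norm of a complex valued function. -/
def l2 (f : Esp N → ℂ) : ℝ := Real.sqrt (∫ x, ‖f x‖ ^ 2)

/-- `L²` norm of a real valued function. -/
def l2R (f : Esp N → ℝ) : ℝ := Real.sqrt (∫ x, f x ^ 2)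

/-- the phase factor of the solitary wave. -/
def phase (ε : ℝ) (a ξ : Esp N) (θ : ℝ) (x : Esp N) : ℂ :=
  Complex.exp (Complex.I / (ε : ℂ) * ((1 / 2 * (inner ℝ (x - a) ξ : ℝ) + θ : ℝ) : ℂ))

/-- the solitary wave `U_σ`, `σ = (a, ξ, θ)`. -/
def solWave (ε γ β : ℝ) (U : Esp N → ℝ) (a ξ : Esp N) (θ : ℝ) (x : Esp N) : ℂ :=
  ((ε ^ γ * U (ε ^ (-β) • (x - a)) : ℝ) : ℂ) * phase ε a ξ θ x

/-- tangent vectors `z^ε_{j,σ}`, `j = 1,…,N`. -/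
def zA (ε γ β : ℝ) (U : Esp N → ℝ) (a ξ : Esp N) (θ : ℝ) (j : Fin N) (x : Esp N) : ℂ :=
  -(((ε ^ (γ - β) * pd j U (ε ^ (-β) • (x - a)) : ℝ) : ℂ)
      + Complex.I * ((ε ^ (γ - 1) / 2 * ξ j * U (ε ^ (-β) • (x - a)) : ℝ) : ℂ))
    * phase ε a ξ θ x

/-- tangent vectors `z^ε_{N+j,σ}`, `j = 1,…,N`. -/
def zXi (ε γ β : ℝ) (U : Esp N → ℝ) (a ξ : Esp N) (θ : ℝ) (j : Fin N) (x : Esp N) : ℂ :=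
  Complex.I / (2 * (ε : ℂ)) * ((x j : ℝ) : ℂ) * solWave ε γ β U a ξ θ x

/-- tangent vector `z^ε_{2N+1,σ}`. -/
def zTh (ε γ β : ℝ) (U : Esp N → ℝ) (a ξ : Esp N) (θ : ℝ) (x : Esp N) : ℂ :=
  Complex.I / (ε : ℂ) * solWave ε γ β U a ξ θ x

/-- rescaled tangent vectors `z_{j,0}`, `j = 1,…,N`. -/
def zA0 (U : Esp N → ℝ) (j : Fin N) (x : Esp N) : ℂ := -((pd j U x : ℝ) : ℂ)

/-- rescaled tangent vectors `z_{N+j,0}`, `j = 1,…,N`. -/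
def zXi0 (U : Esp N → ℝ) (j : Fin N) (x : Esp N) : ℂ :=
  Complex.I / 2 * ((x j : ℝ) : ℂ) * ((U x : ℝ) : ℂ)

/-- rescaled tangent vector `z_{2N+1,0}`. -/
def zTh0 (U : Esp N → ℝ) (x : Esp N) : ℂ := Complex.I * ((U x : ℝ) : ℂ)

/-- `w(t,x) = e^{iω_ε(t)/ε} ψ(t,x) − U_{σ(t)}(x)`. -/
def wfun (ε γ β : ℝ) (U : Esp N → ℝ) (a ξ : ℝ → Esp N) (θf ωf : ℝ → ℝ)
    (ψ : ℝ → Esp N → ℂ) (t : ℝ) (x : Esp N) : ℂ :=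
  Complex.exp (Complex.I / (ε : ℂ) * ((ωf t : ℝ) : ℂ)) * ψ t x
    - solWave ε γ β U (a t) (ξ t) (θf t) x

/-- the gauge twist turning `w` into `w̃`. -/
def twist (ε γ β : ℝ) (a ξ : Esp N) (θ : ℝ) (w : Esp N → ℂ) (x : Esp N) : ℂ :=
  ((ε ^ (-γ) : ℝ) : ℂ)
    * Complex.exp (-(Complex.I / (ε : ℂ)) * ((1 / 2 * (ε ^ β * (inner ℝ x ξ : ℝ)) + θ : ℝ) : ℂ))
    * w (a + (ε ^ β : ℝ) • x)

/-- `w̃(t,x)`, the distance from the solitary wave in the fixed frame. -/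
def wtil (ε γ β : ℝ) (U : Esp N → ℝ) (a ξ : ℝ → Esp N) (θf ωf : ℝ → ℝ)
    (ψ : ℝ → Esp N → ℂ) (t : ℝ) (x : Esp N) : ℂ :=
  twist ε γ β (a t) (ξ t) (θf t) (wfun ε γ β U a ξ θf ωf ψ t) x

/-- the averaged force discrepancy `v(t)`. -/
def vfun (ε β ρ : ℝ) (U V : Esp N → ℝ) (a : ℝ → Esp N) (t : ℝ) : Esp N :=
  (1 / ρ) • ∫ x, U x ^ 2 • (grad V (a t + (ε ^ β : ℝ) • x) - grad V (a t))

/-- the Taylor remainder `R_V(t,x)` of the potential. -/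
def RVfun (ε β : ℝ) (V : Esp N → ℝ) (a : ℝ → Esp N) (t : ℝ) (x : Esp N) : ℝ :=
  V (a t + (ε ^ β : ℝ) • x) - V (a t) - ε ^ β * (inner ℝ x (grad V (a t)) : ℝ)

/-- the nonlinear remainder `R_F`; with `w = v` it is also the integrand of condition (N2). -/
def RFfun (f : ℝ → ℝ) (U : Esp N → ℝ) (w : Esp N → ℂ) (x : Esp N) : ℂ :=
  ((f (‖((U x : ℝ) : ℂ) + w x‖ ^ 2) : ℝ) : ℂ) * (((U x : ℝ) : ℂ) + w x)
    - ((f (U x ^ 2) * U x : ℝ) : ℂ)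
    - ((2 * deriv f (U x ^ 2) * U x ^ 2 + f (U x ^ 2) : ℝ) : ℂ) * (((w x).re : ℝ) : ℂ)
    - Complex.I * ((f (U x ^ 2) : ℝ) : ℂ) * (((w x).im : ℝ) : ℂ)

/-- condition (N2) with constant `C` and test function `φ`. -/
def IsN2Const (f : ℝ → ℝ) (U : Esp N → ℝ) (φ : Esp N → ℂ) (C : ℝ) : Prop :=
  0 < C ∧ ∀ v : SchwartzMap (Esp N) ℂ, l2 ⇑v ≤ 1 →
    ‖∫ x, RFfun f U (⇑v) x * (starRingEnd ℂ) (φ x)‖ ≤ C * l2 ⇑v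

/-- the nonlinear Schrödinger equation of problem `(P_ε)` at `(t,x)`. -/
def NLSeq (ε α : ℝ) (f : ℝ → ℝ) (V : Esp N → ℝ) (ψ : ℝ → Esp N → ℂ) (t : ℝ) (x : Esp N) :
    Prop :=
  Complex.I * (ε : ℂ) * deriv (fun s => ψ s x) t + (ε : ℂ) ^ 2 * lapC (ψ t) x
      - ((f (ε ^ (-(2 * α)) * ‖ψ t x‖ ^ 2) : ℝ) : ℂ) * ψ t x
    = ((V x : ℝ) : ℂ) * ψ t x

/-- the effective trajectory system for `σ(t) = (a(t), ξ(t), θ(t))`. -/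
def Traj (ε β ρ : ℝ) (U V : Esp N → ℝ) (a ξ : ℝ → Esp N) (θf : ℝ → ℝ) : Prop :=
  (∀ t, Integrable fun x : Esp N => U x ^ 2 • grad V (a t + (ε ^ β : ℝ) • x)) ∧
  (∀ t, HasDerivAt a (ξ t) t) ∧
  (∀ t, HasDerivAt ξ (-((2 / ρ) • ∫ x, U x ^ 2 • grad V (a t + (ε ^ β : ℝ) • x))) t) ∧
  (∀ t, HasDerivAt θf 0 t)

/-- the Cauchy problem for the phase correction `ω_ε`. -/
def OmEq (ε β ω : ℝ) (V : Esp N → ℝ) (a ξ : ℝ → Esp N) (ωf : ℝ → ℝ) : Prop :=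
  ωf 0 = 0 ∧ ∀ t, HasDerivAt ωf (ε ^ (2 - 2 * β) * ω - 1 / 4 * ‖ξ t‖ ^ 2 + V (a t)) t

/-- the standing hypotheses on the nonlinearity `f` and the profile `U`:
`f` is continuous on `[0,∞)`, `C¹` on `(0,∞)` and homogeneous of degree `p`;
`U` is positive, solves the elliptic equation `−ΔU + f(U²)U − ωU = 0`, has mass `ρ > 0`,
and `f(U²)`, `f'(U²)U²` are bounded. -/
def Setup (p ω ρ : ℝ) (f : ℝ → ℝ) (U : Esp N → ℝ) : Prop :=
  ContinuousOn f (Set.Ici 0) ∧ ContDiffOn ℝ 1 f (Set.Ioi 0) ∧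
  (∀ lam > (0:ℝ), ∀ s > (0:ℝ), f (lam * s) = lam ^ p * f s) ∧
  (∀ x, 0 < U x) ∧
  (∀ x, -lapR U x + f (U x ^ 2) * U x - ω * U x = 0) ∧
  (∫ x, U x ^ 2) = ρ ∧ 0 < ρ ∧
  (∃ M, ∀ x, |f (U x ^ 2)| ≤ M ∧ |deriv f (U x ^ 2) * U x ^ 2| ≤ M)

/-- `g` agrees with a Schwartz function. -/
def IsSchwartz (g : Esp N → ℂ) : Prop := ∃ G : SchwartzMap (Esp N) ℂ, ∀ x, G x = g x

/-- condition (Vr): regular potential, bounded below, with bounded second derivatives. -/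
def Vr (V : Esp N → ℝ) : Prop :=
  ContDiff ℝ 2 V ∧ BddBelow (Set.range V) ∧
  ∃ h : ℝ, ∀ (x : Esp N) (i j : Fin N),
    |fderiv ℝ (pd i V) x (EuclideanSpace.single j 1)| ≤ h

/-- condition (Vs): potential with a power-like singularity at the origin. -/
def Vs (V : Esp N → ℝ) : Prop :=
  (∀ x : Esp N, x ≠ 0 → ContDiffAt ℝ 2 V x) ∧
  (∃ ζ : ℝ, 0 < ζ ∧ ζ < 2 ∧ ∃ c₁ > (0:ℝ), ∃ c₂ > (0:ℝ),
    ∀ x : Esp N, x ≠ 0 → ‖x‖ ≤ 1 →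
      |V x| ≤ c₁ * ‖x‖ ^ (-ζ) ∧ ‖grad V x‖ ≤ c₂ * ‖x‖ ^ (-ζ - 1)) ∧
  (∃ m : ℝ, (N : ℝ) / 2 < m ∧
    MemLp V (ENNReal.ofReal m) (volume.restrict {x : Esp N | 1 ≤ ‖x‖})) ∧
  Tendsto (fun x : Esp N => ‖grad V x‖) (cocompact (Esp N)) (nhds 0)

end NLS

section AffineChangeOfVariables

variable {E F : Type*} [NormedAddCommGroup E] [NormedSpace ℝ E] [MeasurableSpace E]
  [BorelSpace E] [FiniteDimensional ℝ E] {μ : Measure E} [μ.IsAddHaarMeasure]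
  [NormedAddCommGroup F]

theorem MeasureTheory.Measure.map_add_smul_addHaar (a : E) {c : ℝ} (hc : c ≠ 0) :
    Measure.map (fun y => a + c • y) μ
      = ENNReal.ofReal |(c ^ Module.finrank ℝ E)⁻¹| • μ := by
  have h : (fun y : E => a + c • y) = (a + ·) ∘ (c • ·) := rfl
  rw [h, ← Measure.map_map (measurable_const_add a) (measurable_const_smul c),
    Measure.map_addHaar_smul μ hc, Measure.map_smul, map_add_left_eq_self]

theorem MeasureTheory.MemLp.comp_add_smul {p : ℝ≥0∞} {f : E → F} (hf : MemLp f p μ) (a : E)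
    {c : ℝ} (hc : c ≠ 0) : MemLp (fun y => f (a + c • y)) p μ := by
  refine MemLp.comp_of_map ?_ ((measurable_const_smul c).const_add a).aemeasurable
  rw [Measure.map_add_smul_addHaar a hc]
  exact hf.smul_measure ENNReal.ofReal_ne_top

theorem MeasureTheory.Measure.integral_eq_pow_smul_integral_comp_add_smul [NormedSpace ℝ F]
    (f : E → F) (a : E) {c : ℝ} (hc : 0 < c) :
    ∫ x, f x ∂μ = c ^ Module.finrank ℝ E • ∫ y, f (a + c • y) ∂μ := by
  rw [Measure.integral_comp_smul μ (fun z => f (a + z)), integral_add_left_eq_self,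
    abs_of_pos (by positivity), smul_smul, mul_inv_cancel₀ (by positivity), one_smul]

end AffineChangeOfVariables

theorem MeasureTheory.MemLp.integrable_mul_conj {α : Type*} [MeasurableSpace α] {μ : Measure α}
    {f g : α → ℂ} (hf : MemLp f 2 μ) (hg : MemLp g 2 μ) :
    Integrable (fun x => f x * starRingEnd ℂ (g x)) μ :=
  hf.integrable_mul hg.star

namespace NLS

variable {N : ℕ}

theorem symp_linear_combination_right {f g₁ g₂ : Esp N → ℂ}
    (h₁ : Integrable fun x => f x * starRingEnd ℂ (g₁ x))
    (h₂ : Integrable fun x => f x * starRingEnd ℂ (g₂ x)) (c₁ c₂ : ℝ) :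
    symp f (fun x => c₁ * g₁ x + c₂ * g₂ x) = c₁ * symp f g₁ + c₂ * symp f g₂ := by
  have hpt : (fun x => f x * starRingEnd ℂ (c₁ * g₁ x + c₂ * g₂ x))
      = fun x => c₁ * (f x * starRingEnd ℂ (g₁ x)) + c₂ * (f x * starRingEnd ℂ (g₂ x)) := by
    ext x
    simp only [map_add, map_mul, Complex.conj_ofReal]
    ring
  rw [symp, hpt, integral_add (h₁.const_mul _) (h₂.const_mul _), integral_const_mul,
    integral_const_mul, Complex.add_im, Complex.im_ofReal_mul, Complex.im_ofReal_mul, symp, symp]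

theorem symp_ofReal_mul_right (f g : Esp N → ℂ) (c : ℝ) :
    symp f (fun x => c * g x) = c * symp f g := by
  have hpt : (fun x => f x * starRingEnd ℂ (c * g x))
      = fun x => c * (f x * starRingEnd ℂ (g x)) := by
    ext x
    simp only [map_mul, Complex.conj_ofReal]
    ring
  rw [symp, hpt, integral_const_mul, Complex.im_ofReal_mul, symp]

section MovingFrame

variable {ε γ β : ℝ} {U : Esp N → ℝ} {a ξ : Esp N} {θ : ℝ}

theorem twist_apply (w : Esp N → ℂ) (y : Esp N) :
    twist ε γ β a ξ θ w y = ((ε ^ (-γ) : ℝ) : ℂ)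
      * starRingEnd ℂ (phase ε a ξ θ (a + (ε ^ β : ℝ) • y)) * w (a + (ε ^ β : ℝ) • y) := by
  rw [twist, phase, add_sub_cancel_left, real_inner_smul_left, ← Complex.exp_conj]
  congr 3
  simp only [map_mul, map_div₀, Complex.conj_I, Complex.conj_ofReal]
  ring

theorem symp_eq_rpow_mul_symp_twist (hε : 0 < ε) {w z g : Esp N → ℂ}
    (hz : ∀ y, z (a + (ε ^ β : ℝ) • y) = phase ε a ξ θ (a + (ε ^ β : ℝ) • y) * g y) :
    symp w z = ε ^ (γ + β * N) * symp (twist ε γ β a ξ θ w) g := by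
  have hpt : ∀ y, w (a + (ε ^ β : ℝ) • y) * starRingEnd ℂ (z (a + (ε ^ β : ℝ) • y))
      = ((ε ^ γ : ℝ) : ℂ) * (twist ε γ β a ξ θ w y * starRingEnd ℂ (g y)) := by
    intro y
    have hγ : ((ε ^ γ : ℝ) : ℂ) * ((ε ^ (-γ) : ℝ) : ℂ) = 1 := by
      rw [← Complex.ofReal_mul, ← rpow_add hε, add_neg_cancel, rpow_zero, Complex.ofReal_one]
    rw [hz, twist_apply, map_mul]
    linear_combination (-(w (a + (ε ^ β : ℝ) • y)
      * starRingEnd ℂ (phase ε a ξ θ (a + (ε ^ β : ℝ) • y)) * starRingEnd ℂ (g y))) * hγ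
  have hscale : ((ε ^ β) ^ Module.finrank ℝ (Esp N) : ℝ) = ε ^ (β * N) := by
    rw [finrank_euclideanSpace_fin, ← rpow_natCast, ← rpow_mul hε.le]
  rw [symp, Measure.integral_eq_pow_smul_integral_comp_add_smul _ a (rpow_pos_of_pos hε β),
    hscale, funext hpt, integral_const_mul, Complex.real_smul, ← mul_assoc, ← Complex.ofReal_mul,
    Complex.im_ofReal_mul, ← rpow_add hε, add_comm (β * N), symp]

theorem rpow_neg_smul_add_rpow_smul_sub_self (hε : 0 < ε) (y : Esp N) :
    (ε ^ (-β) : ℝ) • ((a + (ε ^ β : ℝ) • y) - a) = y := by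
  rw [add_sub_cancel_left, smul_smul, ← rpow_add hε, neg_add_cancel, rpow_zero, one_smul]

theorem zTh_add_smul (hε : 0 < ε) (y : Esp N) :
    zTh ε γ β U a ξ θ (a + (ε ^ β : ℝ) • y)
      = phase ε a ξ θ (a + (ε ^ β : ℝ) • y) * (((ε ^ (γ - 1) : ℝ) : ℂ) * zTh0 U y) := by
  have h : ((ε ^ (γ - 1) : ℝ) : ℂ) = ((ε ^ γ : ℝ) : ℂ) / ε := by
    rw [rpow_sub hε, rpow_one, Complex.ofReal_div]
  rw [zTh, solWave, rpow_neg_smul_add_rpow_smul_sub_self hε, zTh0, h]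
  push_cast
  ring

theorem zA_add_smul (hε : 0 < ε) (j : Fin N) (y : Esp N) :
    zA ε γ β U a ξ θ j (a + (ε ^ β : ℝ) • y)
      = phase ε a ξ θ (a + (ε ^ β : ℝ) • y)
        * (((ε ^ (γ - β) : ℝ) : ℂ) * zA0 U j y
          + ((-(ε ^ (γ - 1) / 2 * ξ j) : ℝ) : ℂ) * zTh0 U y) := by
  rw [zA, rpow_neg_smul_add_rpow_smul_sub_self hε, zA0, zTh0]
  push_cast
  ring

theorem zXi_add_smul (hε : 0 < ε) (j : Fin N) (y : Esp N) :
    zXi ε γ β U a ξ θ j (a + (ε ^ β : ℝ) • y)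
      = phase ε a ξ θ (a + (ε ^ β : ℝ) • y)
        * (((ε ^ (γ + β - 1) : ℝ) : ℂ) * zXi0 U j y
          + ((ε ^ (γ - 1) / 2 * a j : ℝ) : ℂ) * zTh0 U y) := by
  have h₁ : ((ε ^ (γ + β - 1) : ℝ) : ℂ) = ((ε ^ γ : ℝ) : ℂ) * ((ε ^ β : ℝ) : ℂ) / ε := by
    rw [rpow_sub hε, rpow_add hε, rpow_one, Complex.ofReal_div, Complex.ofReal_mul]
  have h₂ : ((ε ^ (γ - 1) : ℝ) : ℂ) = ((ε ^ γ : ℝ) : ℂ) / ε := by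
    rw [rpow_sub hε, rpow_one, Complex.ofReal_div]
  have hcoord : (a + (ε ^ β : ℝ) • y) j = a j + ε ^ β * y j := rfl
  rw [zXi, solWave, rpow_neg_smul_add_rpow_smul_sub_self hε, zXi0, zTh0, hcoord, h₁]
  push_cast
  rw [h₂]
  field_simp
  ring

end MovingFrame

section SquareIntegrability

variable {p : ℝ≥0∞} {U : Esp N → ℝ}

theorem memLp_twist {ε : ℝ} (hε : 0 < ε) (γ β : ℝ) (a ξ : Esp N) (θ : ℝ) {w : Esp N → ℂ}
    (hw : MemLp w p volume) : MemLp (twist ε γ β a ξ θ w) p volume := by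
  have hwS := hw.comp_add_smul a (rpow_pos_of_pos hε β).ne'
  refine MemLp.of_le_mul (c := ε ^ (-γ)) hwS ?_ (Eventually.of_forall fun x => le_of_eq ?_)
  · refine (Continuous.aestronglyMeasurable ?_).mul hwS.aestronglyMeasurable
    fun_prop
  · rw [twist, norm_mul, norm_mul, Complex.norm_exp, Complex.norm_real, Real.norm_eq_abs,
      abs_of_pos (rpow_pos_of_pos hε _)]
    simp

theorem memLp_zTh0 (hU : MemLp U p volume) : MemLp (zTh0 U) p volume := by
  refine MemLp.of_le hU (aestronglyMeasurable_const.mul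
    (Complex.continuous_ofReal.comp_aestronglyMeasurable hU.aestronglyMeasurable))
    (Eventually.of_forall fun x => le_of_eq ?_)
  simp [zTh0]

theorem memLp_zA0 (hU : MemLp (fun x => ‖grad U x‖) p volume) (j : Fin N) :
    MemLp (zA0 U j) p volume := by
  refine MemLp.of_le hU
    (measurable_fderiv_apply_const ℝ U _).complex_ofReal.neg.aestronglyMeasurable
    (Eventually.of_forall fun x => ?_)
  rw [zA0, norm_neg, Complex.norm_real, norm_norm]
  exact PiLp.norm_apply_le (grad U x) j

theorem memLp_zXi0 (hU : MemLp U p volume) (hxU : MemLp (fun x : Esp N => ‖x‖ * U x) p volume)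
    (j : Fin N) : MemLp (zXi0 U j) p volume := by
  refine MemLp.of_le hxU ((Continuous.aestronglyMeasurable (by fun_prop)).mul
    (Complex.continuous_ofReal.comp_aestronglyMeasurable hU.aestronglyMeasurable))
    (Eventually.of_forall fun x => ?_)
  have hcoord : |x j| ≤ ‖x‖ := by simpa using PiLp.norm_apply_le x j
  simp only [zXi0, norm_mul, norm_div, Complex.norm_I, Complex.norm_ofNat, Complex.norm_real,
    Real.norm_eq_abs, abs_norm]
  gcongr
  linarith [abs_nonneg (x j)]

end SquareIntegrability

theorem pairing_change_of_frame_general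
    (N : ℕ) (ε γ β : ℝ) (hε : 0 < ε)
    (U : Esp N → ℝ)
    (hUL2 : MemLp U 2 volume)
    (hgradL2 : MemLp (fun x => ‖grad U x‖) 2 volume)
    (hxUL2 : MemLp (fun x : Esp N => ‖x‖ * U x) 2 volume)
    (a ξ : Esp N) (θ : ℝ) (w : Esp N → ℂ) (hw : MemLp w 2 volume) :
    (∀ j : Fin N, symp w (zA ε γ β U a ξ θ j)
        = ε ^ (2 * γ + β * ((N : ℝ) - 1)) * symp (twist ε γ β a ξ θ w) (zA0 U j)
          - 1 / 2 * ε ^ (2 * γ + β * (N : ℝ) - 1) * ξ j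
            * symp (twist ε γ β a ξ θ w) (zTh0 U)) ∧
    (∀ j : Fin N, symp w (zXi ε γ β U a ξ θ j)
        = ε ^ (2 * γ + β * ((N : ℝ) + 1) - 1) * symp (twist ε γ β a ξ θ w) (zXi0 U j)
          + 1 / 2 * ε ^ (2 * γ + β * (N : ℝ) - 1) * a j
            * symp (twist ε γ β a ξ θ w) (zTh0 U)) ∧
    symp w (zTh ε γ β U a ξ θ)
      = ε ^ (2 * γ + β * (N : ℝ) - 1) * symp (twist ε γ β a ξ θ w) (zTh0 U) := by
  have htw := memLp_twist hε γ β a ξ θ hw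
  have hTh := htw.integrable_mul_conj (memLp_zTh0 hUL2)
  have hθ : ε ^ (2 * γ + β * N - 1) = ε ^ (γ + β * N) * ε ^ (γ - 1) := by
    rw [← rpow_add hε]; ring_nf
  refine ⟨fun j => ?_, fun j => ?_, ?_⟩
  · rw [symp_eq_rpow_mul_symp_twist hε (zA_add_smul hε j),
      symp_linear_combination_right (htw.integrable_mul_conj (memLp_zA0 hgradL2 j)) hTh, hθ,
      show ε ^ (2 * γ + β * (N - 1)) = ε ^ (γ + β * N) * ε ^ (γ - β) by
        rw [← rpow_add hε]; ring_nf]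
    ring
  · rw [symp_eq_rpow_mul_symp_twist hε (zXi_add_smul hε j),
      symp_linear_combination_right (htw.integrable_mul_conj (memLp_zXi0 hUL2 hxUL2 j)) hTh, hθ,
      show ε ^ (2 * γ + β * (N + 1) - 1) = ε ^ (γ + β * N) * ε ^ (γ + β - 1) by
        rw [← rpow_add hε]; ring_nf]
    ring
  · rw [symp_eq_rpow_mul_symp_twist hε (zTh_add_smul hε), symp_ofReal_mul_right, hθ]
    ring

/-- Lemma `sympl-w-tilde-w`: change of frame for the symplectic pairings. -/
theorem pairing_change_of_frame
    (N : ℕ) (hN : 3 ≤ N) (ε γ β : ℝ) (hε : 0 < ε)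
    (U : Esp N → ℝ) (hU : ContDiff ℝ 1 U)
    (hUL2 : MemLp U 2 volume)
    (hgradL2 : MemLp (fun x => ‖grad U x‖) 2 volume)
    (hxUL2 : MemLp (fun x : Esp N => ‖x‖ * U x) 2 volume)
    (a ξ : Esp N) (θ : ℝ) (w : Esp N → ℂ) (hw : MemLp w 2 volume) :
    (∀ j : Fin N, symp w (zA ε γ β U a ξ θ j)
        = ε ^ (2 * γ + β * ((N : ℝ) - 1)) * symp (twist ε γ β a ξ θ w) (zA0 U j)
          - 1 / 2 * ε ^ (2 * γ + β * (N : ℝ) - 1) * ξ j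
            * symp (twist ε γ β a ξ θ w) (zTh0 U)) ∧
    (∀ j : Fin N, symp w (zXi ε γ β U a ξ θ j)
        = ε ^ (2 * γ + β * ((N : ℝ) + 1) - 1) * symp (twist ε γ β a ξ θ w) (zXi0 U j)
          + 1 / 2 * ε ^ (2 * γ + β * (N : ℝ) - 1) * a j
            * symp (twist ε γ β a ξ θ w) (zTh0 U)) ∧
    symp w (zTh ε γ β U a ξ θ)
      = ε ^ (2 * γ + β * (N : ℝ) - 1) * symp (twist ε γ β a ξ θ w) (zTh0 U) :=
  pairing_change_of_frame_general N ε γ β hε U hUL2 hgradL2 hxUL2 a ξ θ w hw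

end NLS
end
end

section
/- Assume the setup with a C¹ potential V : ℝ^N → ℝ, and suppose ψ : ℝ×ℝ^N → ℂ is C¹ in t and C² in x and satisfies pointwise iε∂_tψ + ε²Δψ − f(ε^{−2α}|ψ|²)ψ = V(x)ψ on ℝ×ℝ^N; here U is only assumed positive and C² (not necessarily Schwartz). Then for all (t,x) ∈ ℝ×ℝ^N: ∂_t w̃(t,x) = (i/ε)(ε^β x·v(t) − R_V(t,x))·(U(x) + w̃(t,x)) + i ε^{1−2β}[ Δw̃(t,x) + ω w̃(t,x) − (2 f'(U²(x)) U²(x) + f(U²(x))) Re(w̃(t,x)) − i f(U²(x)) Im(w̃(t,x)) − R_F(t,x) ], where R_F(t,x) := f(|U(x)+w̃(t,x)|²)(U(x)+w̃(t,x)) − f(U²(x))U(x) − (2 f'(U²(x)) U²(x) + f(U²(x))) Re(w̃(t,x)) − i f(U²(x)) Im(w̃(t,x)). -/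
open MeasureTheory Real Filter
open scoped BigOperators ENNReal

noncomputable section

namespace NLS

variable {N : ℕ}

/-!
Write `U + w̃ = ε^{-γ} e^{iφ} ψ(t, a + ε^β x)`, a plane wave in `x` times a rescaled translate of
`ψ`. Time and space derivatives of such a product are explicit: in `i ε^{1-2β} Δ` the cross term
`2 i ε^β k·∇ψ`, with `k = -(ε^β / 2ε) ξ`, cancels the transport term `ξ·∇ψ` produced by the moving
centre `a(t)`; the NLS replaces `∂ₜψ`, and homogeneity of `f` turns `f(ε^{-2α}|ψ|²)` into
`ε^{2-2β} f(|U + w̃|²)`. What remains is absorbed by the elliptic equation for `U` and by the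
definitions of `v`, `R_V` and `R_F`.
-/

lemma differentiable_fderiv_apply {E F : Type*} [NormedAddCommGroup E] [NormedSpace ℝ E]
    [NormedAddCommGroup F] [NormedSpace ℝ F] {g : E → F} (hg : ContDiff ℝ 2 g) (v : E) :
    Differentiable ℝ fun x => fderiv ℝ g x v :=
  ((hg.fderiv_right (by norm_num)).clm_apply contDiff_const).differentiable one_ne_zero

lemma differentiable_pdC {g : Esp N → ℂ} (hg : ContDiff ℝ 2 g) (j : Fin N) :
    Differentiable ℝ (pdC j g) :=
  differentiable_fderiv_apply hg _

lemma pdC_eq_of_hasFDerivAt {g : Esp N → ℂ} {L : Esp N →L[ℝ] ℂ} {x : Esp N}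
    (h : HasFDerivAt g L x) (j : Fin N) : pdC j g x = L (EuclideanSpace.single j 1) := by
  rw [pdC, h.fderiv]

lemma pdC_const_mul (c : ℂ) (g : Esp N → ℂ) (j : Fin N) (x : Esp N) :
    pdC j (fun z => c * g z) x = c * pdC j g x := by
  rw [pdC, pdC, show (fun z => c * g z) = c • g from rfl, fderiv_const_smul_field]
  rfl

lemma lapC_const_mul (c : ℂ) (g : Esp N → ℂ) (x : Esp N) :
    lapC (fun z => c * g z) x = c * lapC g x := by
  simp only [lapC, Finset.mul_sum]
  refine Finset.sum_congr rfl fun j _ => ?_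
  rw [show pdC j (fun z => c * g z) = fun z => c * pdC j g z from
    funext (pdC_const_mul c g j), pdC_const_mul]

lemma pdC_linear_combination {g h : Esp N → ℂ} {y : Esp N} (hg : DifferentiableAt ℝ g y)
    (hh : DifferentiableAt ℝ h y) (c d : ℂ) (j : Fin N) :
    pdC j (fun z => c * g z + d * h z) y = c * pdC j g y + d * pdC j h y := by
  rw [pdC_eq_of_hasFDerivAt ((hg.hasFDerivAt.const_mul c).fun_add (hh.hasFDerivAt.const_mul d))]
  simp [pdC]

lemma pdC_sub_ofReal {g : Esp N → ℂ} {u : Esp N → ℝ} {x : Esp N}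
    (hg : DifferentiableAt ℝ g x) (hu : DifferentiableAt ℝ u x) (j : Fin N) :
    pdC j (fun z => g z - (u z : ℂ)) x = pdC j g x - (pd j u x : ℂ) := by
  have hu' : HasFDerivAt (fun z => (u z : ℂ)) (Complex.ofRealCLM.comp (fderiv ℝ u x)) x :=
    Complex.ofRealCLM.hasFDerivAt.comp x hu.hasFDerivAt
  rw [pdC_eq_of_hasFDerivAt (hg.hasFDerivAt.fun_sub hu')]
  simp [pdC, pd]

lemma lapC_sub_ofReal {g : Esp N → ℂ} {u : Esp N → ℝ} (hg : ContDiff ℝ 2 g)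
    (hu : ContDiff ℝ 2 u) (x : Esp N) :
    lapC (fun z => g z - (u z : ℂ)) x = lapC g x - (lapR u x : ℂ) := by
  have hg1 := hg.differentiable two_ne_zero
  have hu1 := hu.differentiable two_ne_zero
  simp only [lapC, lapR, Complex.ofReal_sum, ← Finset.sum_sub_distrib]
  refine Finset.sum_congr rfl fun j _ => ?_
  rw [show pdC j (fun z => g z - (u z : ℂ)) = fun z => pdC j g z - (pd j u z : ℂ) from
    funext fun z => pdC_sub_ofReal (hg1 z) (hu1 z) j]
  exact pdC_sub_ofReal (differentiable_pdC hg j x)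
    (differentiable_fderiv_apply hu (EuclideanSpace.single j 1) x) j

lemma sum_mul_pdC_eq_fderiv (g : Esp N → ℂ) (y v : Esp N) :
    ∑ j, (v j : ℂ) * pdC j g y = fderiv ℝ g y v := by
  conv_rhs => rw [← (EuclideanSpace.basisFun (Fin N) ℝ).sum_repr v]
  simp [pdC, map_sum, Complex.real_smul]

lemma hasDerivAt_comp_curve {E F : Type*} [NormedAddCommGroup E] [NormedSpace ℝ E]
    [NormedAddCommGroup F] [NormedSpace ℝ F] {Ψ : ℝ → E → F} {γ : ℝ → E} {v : E} {t : ℝ}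
    (hΨ : DifferentiableAt ℝ (fun q : ℝ × E => Ψ q.1 q.2) (t, γ t)) (hγ : HasDerivAt γ v t) :
    HasDerivAt (fun s => Ψ s (γ s))
      (deriv (fun s => Ψ s (γ t)) t + fderiv ℝ (Ψ t) (γ t) v) t := by
  set L := fderiv ℝ (fun q : ℝ × E => Ψ q.1 q.2) (t, γ t)
  have hL : HasFDerivAt (fun q : ℝ × E => Ψ q.1 q.2) L (t, γ t) := hΨ.hasFDerivAt
  have htime : HasDerivAt (fun s => Ψ s (γ t)) (L (1, 0)) t :=
    hL.comp_hasDerivAt (f := fun s => (s, γ t)) t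
      ((hasDerivAt_id' t).prodMk (hasDerivAt_const t (γ t)))
  have hspace : HasFDerivAt (Ψ t) (L.comp (ContinuousLinearMap.inr ℝ ℝ E)) (γ t) :=
    hL.comp (γ t) (hasFDerivAt_prodMk_right t (γ t))
  have h : HasDerivAt (fun s => Ψ s (γ s)) (L (1, v)) t :=
    hL.comp_hasDerivAt (f := fun s => (s, γ s)) t ((hasDerivAt_id' t).prodMk hγ)
  rw [htime.deriv, hspace.fderiv]
  convert h using 1
  rw [ContinuousLinearMap.comp_apply, ContinuousLinearMap.inr_apply, ← map_add]
  simp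

def planeWave (k : Esp N) (c : ℝ) (z : Esp N) : ℂ :=
  Complex.exp (Complex.I * ((inner ℝ k z + c : ℝ) : ℂ))

def modulate (k : Esp N) (c B : ℝ) (b : Esp N) (g : Esp N → ℂ) (z : Esp N) : ℂ :=
  planeWave k c z * g (b + B • z)

lemma norm_planeWave (k : Esp N) (c : ℝ) (z : Esp N) : ‖planeWave k c z‖ = 1 := by
  rw [planeWave, mul_comm, Complex.norm_exp_ofReal_mul_I]

lemma hasFDerivAt_planeWave (k : Esp N) (c : ℝ) (z : Esp N) :
    HasFDerivAt (planeWave k c)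
      ((Complex.I * planeWave k c z) • Complex.ofRealCLM.comp (innerSL ℝ k)) z := by
  have hphase : HasFDerivAt (fun w : Esp N => ((inner ℝ k w + c : ℝ) : ℂ))
      (Complex.ofRealCLM.comp (innerSL ℝ k)) z :=
    Complex.ofRealCLM.hasFDerivAt.comp z ((innerSL ℝ k).hasFDerivAt.add_const c)
  refine (hphase.const_mul Complex.I).cexp.congr_fderiv ?_
  ext v
  simp [planeWave]
  ring

lemma hasDerivAt_planeWave_param {k : ℝ → Esp N} {c : ℝ → ℝ} {k' : Esp N} {c' t : ℝ}
    (hk : HasDerivAt k k' t) (hc : HasDerivAt c c' t) (z : Esp N) :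
    HasDerivAt (fun s => planeWave (k s) (c s) z)
      (planeWave (k t) (c t) z * (Complex.I * ((inner ℝ k' z + c' : ℝ) : ℂ))) t := by
  have hinner : HasDerivAt (fun s => inner ℝ (k s) z) (inner ℝ k' z) t := by
    simpa using hk.inner ℝ (hasDerivAt_const t z)
  exact ((hinner.add hc).ofReal_comp.const_mul Complex.I).cexp

lemma pdC_modulate {k : Esp N} {c B : ℝ} {b z : Esp N} {g : Esp N → ℂ}
    (hg : DifferentiableAt ℝ g (b + B • z)) (j : Fin N) :
    pdC j (modulate k c B b g) z
      = modulate k c B b (fun y => Complex.I * k j * g y + B * pdC j g y) z := by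
  have haff : HasFDerivAt (fun w : Esp N => b + B • w) (B • ContinuousLinearMap.id ℝ (Esp N)) z :=
    ((hasFDerivAt_id z).const_smul B).const_add b
  have h : HasFDerivAt (modulate k c B b g) _ z :=
    (hasFDerivAt_planeWave k c z).mul (hg.hasFDerivAt.comp z haff)
  rw [pdC_eq_of_hasFDerivAt h]
  simp [modulate, pdC, EuclideanSpace.inner_single_right]
  ring

lemma lapC_modulate {k : Esp N} {c B : ℝ} {b : Esp N} {g : Esp N → ℂ} (hg : ContDiff ℝ 2 g)
    (x : Esp N) :
    lapC (modulate k c B b g) x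
      = planeWave k c x * (-(‖k‖ ^ 2 : ℝ) * g (b + B • x)
          + 2 * Complex.I * B * fderiv ℝ g (b + B • x) k + B ^ 2 * lapC g (b + B • x)) := by
  have hg1 := hg.differentiable two_ne_zero
  have hpdC : ∀ j, pdC j (pdC j (modulate k c B b g)) x
      = planeWave k c x * (Complex.I * k j * (Complex.I * k j * g (b + B • x)
          + B * pdC j g (b + B • x)) + B * (Complex.I * k j * pdC j g (b + B • x)
          + B * pdC j (pdC j g) (b + B • x))) := by
    intro j
    rw [show pdC j (modulate k c B b g) = modulate k c B b
        (fun y => Complex.I * k j * g y + B * pdC j g y) from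
      funext fun z => pdC_modulate (hg1 _) j,
      pdC_modulate (((hg1 _).const_mul _).fun_add ((differentiable_pdC hg j _).const_mul _)),
      modulate, pdC_linear_combination (hg1 _) (differentiable_pdC hg j _)]
  simp only [lapC, hpdC, ← Finset.mul_sum]
  congr 1
  simp only [← sum_mul_pdC_eq_fderiv, EuclideanSpace.real_norm_sq_eq, Complex.ofReal_sum,
    Complex.ofReal_pow, Finset.sum_mul, Finset.mul_sum, ← Finset.sum_neg_distrib, ← Finset.sum_add_distrib]
  refine Finset.sum_congr rfl fun j _ => ?_
  linear_combination ((k j : ℂ) ^ 2 * g (b + B • x)) * Complex.I_sq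

lemma hasDerivAt_modulate_param {k b : ℝ → Esp N} {c : ℝ → ℝ} {ψ : ℝ → Esp N → ℂ}
    {k' b' : Esp N} {c' B t : ℝ} (hk : HasDerivAt k k' t) (hc : HasDerivAt c c' t)
    (hb : HasDerivAt b b' t) {z : Esp N}
    (hψ : DifferentiableAt ℝ (fun q : ℝ × Esp N => ψ q.1 q.2) (t, b t + B • z)) :
    HasDerivAt (fun s => modulate (k s) (c s) B (b s) (ψ s) z)
      (planeWave (k t) (c t) z * (Complex.I * ((inner ℝ k' z + c' : ℝ) : ℂ) * ψ t (b t + B • z)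
        + deriv (fun s => ψ s (b t + B • z)) t + fderiv ℝ (ψ t) (b t + B • z) b')) t := by
  refine ((hasDerivAt_planeWave_param hk hc z).fun_mul
    (hasDerivAt_comp_curve (γ := fun s => b s + B • z) hψ (hb.add_const _))).congr_deriv ?_
  ring

lemma wtil_eq {ε : ℝ} (hε : 0 < ε) (γ β : ℝ) (U : Esp N → ℝ) (a ξ : ℝ → Esp N)
    (θf ωf : ℝ → ℝ) (ψ : ℝ → Esp N → ℂ) (s : ℝ) (z : Esp N) :
    wtil ε γ β U a ξ θf ωf ψ s z
      = ((ε ^ (-γ) : ℝ) : ℂ) * modulate ((-(ε ^ β / (2 * ε))) • ξ s) ((ωf s - θf s) / ε)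
          (ε ^ β) (a s) (ψ s) z - U z := by
  have hshift : ε ^ (-β) • ε ^ β • z = z := by
    rw [smul_smul, ← Real.rpow_add hε]; simp
  have hγ : ((ε ^ (-γ) : ℝ) : ℂ) * ((ε ^ γ : ℝ) : ℂ) = 1 := by
    rw [← Complex.ofReal_mul, ← Real.rpow_add hε]; simp
  simp only [wtil, twist, wfun, solWave, phase, modulate, add_sub_cancel_left, hshift,
    real_inner_smul_left, Complex.ofReal_mul]
  set φ : ℝ := 1 / 2 * (ε ^ β * inner ℝ z (ξ s)) + θf s with hφ
  have hphase : Complex.exp (-(Complex.I / ε) * φ) * Complex.exp (Complex.I / ε * (ωf s : ℂ))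
      = planeWave ((-(ε ^ β / (2 * ε))) • ξ s) ((ωf s - θf s) / ε) z := by
    rw [planeWave, ← Complex.exp_add, real_inner_smul_left, real_inner_comm, hφ]
    congr 1
    push_cast
    field_simp
    ring
  have hcancel : Complex.exp (-(Complex.I / ε) * φ) * Complex.exp (Complex.I / ε * φ) = 1 := by
    rw [← Complex.exp_add, neg_mul, neg_add_cancel, Complex.exp_zero]
  linear_combination (((ε ^ (-γ) : ℝ) : ℂ) * ψ s (a s + ε ^ β • z)) * hphase
    - (((ε ^ (-γ) : ℝ) : ℂ) * ((ε ^ γ : ℝ) : ℂ) * U z) * hcancel - (U z : ℂ) * hγ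

lemma contDiff_modulate {n : WithTop ℕ∞} (k : Esp N) (c B : ℝ) (b : Esp N) {g : Esp N → ℂ}
    (hg : ContDiff ℝ n g) : ContDiff ℝ n (modulate k c B b g) := by
  have hofReal : ContDiff ℝ n fun r : ℝ => (r : ℂ) := Complex.ofRealCLM.contDiff
  have hinner : ContDiff ℝ n fun z => inner ℝ k z := contDiff_const.inner ℝ contDiff_id
  unfold modulate planeWave
  fun_prop

lemma lapC_wtil {ε : ℝ} (hε : 0 < ε) (γ β : ℝ) {U : Esp N → ℝ} (hU : ContDiff ℝ 2 U)
    (a ξ : ℝ → Esp N) (θf ωf : ℝ → ℝ) {ψ : ℝ → Esp N → ℂ} {t : ℝ} (hψ : ContDiff ℝ 2 (ψ t))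
    (x : Esp N) :
    lapC (wtil ε γ β U a ξ θf ωf ψ t) x
      = ((ε ^ (-γ) : ℝ) : ℂ) * (planeWave ((-(ε ^ β / (2 * ε))) • ξ t) ((ωf t - θf t) / ε) x
          * (-((ε ^ β / (2 * ε)) ^ 2 * ‖ξ t‖ ^ 2 : ℝ) * ψ t (a t + ε ^ β • x)
            - Complex.I * ((ε ^ β) ^ 2 / ε : ℝ) * fderiv ℝ (ψ t) (a t + ε ^ β • x) (ξ t)
            + ((ε ^ β) ^ 2 : ℝ) * lapC (ψ t) (a t + ε ^ β • x)))
        - lapR U x := by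
  rw [show wtil ε γ β U a ξ θf ωf ψ t = _ from funext (wtil_eq hε γ β U a ξ θf ωf ψ t),
    lapC_sub_ofReal (contDiff_const.mul (contDiff_modulate _ _ _ _ hψ)) hU, lapC_const_mul,
    lapC_modulate hψ, norm_smul, map_smul, Complex.real_smul, Real.norm_eq_abs, mul_pow, sq_abs]
  push_cast
  ring

lemma hasDerivAt_wtil {ε : ℝ} (hε : 0 < ε) (γ β : ℝ) (U : Esp N → ℝ) {a ξ : ℝ → Esp N}
    {θf ωf : ℝ → ℝ} {ψ : ℝ → Esp N → ℂ} {t θ' ω' : ℝ} {ξ' : Esp N}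
    (ha : HasDerivAt a (ξ t) t) (hξ : HasDerivAt ξ ξ' t) (hθ : HasDerivAt θf θ' t)
    (hω : HasDerivAt ωf ω' t) {x : Esp N}
    (hψ : DifferentiableAt ℝ (fun q : ℝ × Esp N => ψ q.1 q.2) (t, a t + ε ^ β • x)) :
    HasDerivAt (fun s => wtil ε γ β U a ξ θf ωf ψ s x)
      (((ε ^ (-γ) : ℝ) : ℂ) * (planeWave ((-(ε ^ β / (2 * ε))) • ξ t) ((ωf t - θf t) / ε) x
        * (Complex.I * (((ω' - θ') / ε - ε ^ β / (2 * ε) * inner ℝ ξ' x : ℝ) : ℂ)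
            * ψ t (a t + ε ^ β • x)
          + deriv (fun s => ψ s (a t + ε ^ β • x)) t
          + fderiv ℝ (ψ t) (a t + ε ^ β • x) (ξ t)))) t := by
  rw [show (fun s => wtil ε γ β U a ξ θf ωf ψ s x) = _ from
    funext fun s => wtil_eq hε γ β U a ξ θf ωf ψ s x]
  have h := hasDerivAt_modulate_param (k := fun s => (-(ε ^ β / (2 * ε))) • ξ s)
    (c := fun s => (ωf s - θf s) / ε) (hξ.const_smul (-(ε ^ β / (2 * ε))))
    ((hω.sub hθ).div_const ε) ha hψ
  refine ((h.const_mul ((ε ^ (-γ) : ℝ) : ℂ)).sub_const (U x : ℂ)).congr_deriv ?_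
  rw [real_inner_smul_left]
  push_cast
  ring

lemma ofReal_homogeneous_mul {f : ℝ → ℝ} {p : ℝ}
    (hfhom : ∀ lam > (0:ℝ), ∀ s > (0:ℝ), f (lam * s) = lam ^ p * f s) {lam s : ℝ}
    (hlam : 0 < lam) {z : ℂ} (hsz : 0 < s ∨ z = 0) :
    (f (lam * s) : ℂ) * z = ((lam ^ p * f s : ℝ) : ℂ) * z := by
  rcases hsz with hs | rfl
  · rw [hfhom lam hlam s hs]
  · simp

lemma rpow_sub_two_mul {ε : ℝ} (hε : 0 < ε) (c β : ℝ) : ε ^ (c - 2 * β) = ε ^ c / (ε ^ β) ^ 2 := by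
  rw [Real.rpow_sub hε, ← Real.rpow_natCast, ← Real.rpow_mul hε.le, mul_comm]
  norm_num

lemma deriv_eq_of_NLSeq {ε α β γ p : ℝ} (hε : 0 < ε) (hβ : β = 1 + (α - γ) * p)
    {f : ℝ → ℝ} (hfhom : ∀ lam > (0:ℝ), ∀ s > (0:ℝ), f (lam * s) = lam ^ p * f s)
    {V : Esp N → ℝ} {ψ : ℝ → Esp N → ℂ} {t : ℝ} {y : Esp N} (hNLS : NLSeq ε α f V ψ t y)
    {W : ℂ} (hW : ‖W‖ = ε ^ (-γ) * ‖ψ t y‖) :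
    deriv (fun s => ψ s y) t
      = Complex.I / ε * (ε ^ 2 * lapC (ψ t) y
          - ((V y : ℂ) + ((ε ^ (2 - 2 * β) * f (‖W‖ ^ 2) : ℝ) : ℂ)) * ψ t y) := by
  have hscale : ε ^ (-(2 * α)) * ‖ψ t y‖ ^ 2 = ε ^ (2 * γ - 2 * α) * ‖W‖ ^ 2 := by
    rw [hW, mul_pow, ← Real.rpow_natCast, ← Real.rpow_natCast, ← Real.rpow_mul hε.le,
      ← mul_assoc, ← Real.rpow_add hε]
    ring_nf
  have hexp : (ε ^ (2 * γ - 2 * α)) ^ p = ε ^ (2 - 2 * β) := by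
    rw [← Real.rpow_mul hε.le, hβ]
    ring_nf
  have hf := ofReal_homogeneous_mul hfhom (Real.rpow_pos_of_pos hε (2 * γ - 2 * α))
    (s := ‖W‖ ^ 2) (z := ψ t y) (by
      rcases eq_or_ne (ψ t y) 0 with h | h
      · exact Or.inr h
      · left; rw [hW]; positivity)
  rw [← hscale, hexp] at hf
  unfold NLSeq at hNLS
  rw [hf] at hNLS
  rw [div_mul_eq_mul_div, eq_div_iff (Complex.ofReal_ne_zero.mpr hε.ne')]
  linear_combination (-Complex.I) * hNLS + ε * deriv (fun s => ψ s y) t * Complex.I_sq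

lemma vfun_eq {ε β ρ : ℝ} {U V : Esp N → ℝ} {a : ℝ → Esp N} {t : ℝ}
    (hF : Integrable fun x => U x ^ 2 • grad V (a t + ε ^ β • x))
    (hρ : ∫ x, U x ^ 2 = ρ) (hρ0 : ρ ≠ 0) :
    vfun ε β ρ U V a t = (1 / ρ) • (∫ x, U x ^ 2 • grad V (a t + ε ^ β • x)) - grad V (a t) := by
  have hU : Integrable fun x => U x ^ 2 := by
    by_contra h
    exact hρ0 (by rw [← hρ, integral_undef h])
  simp only [vfun, smul_sub]
  rw [integral_sub hF (hU.smul_const _), integral_smul_const, hρ, smul_sub, smul_smul,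
    one_div_mul_cancel hρ0, one_smul]

theorem wtilde_evolution_general
    (N : ℕ) (ε p α β γ ω ρ : ℝ) (hε : 0 < ε)
    (hβ : β = 1 + (α - γ) * p)
    (f : ℝ → ℝ)
    (hfhom : ∀ lam > (0:ℝ), ∀ s > (0:ℝ), f (lam * s) = lam ^ p * f s)
    (U : Esp N → ℝ) (hU : ContDiff ℝ 2 U)
    (hell : ∀ x, -lapR U x + f (U x ^ 2) * U x - ω * U x = 0)
    (hρ : (∫ x, U x ^ 2) = ρ) (hρ0 : 0 < ρ)
    (V : Esp N → ℝ)
    (a ξ : ℝ → Esp N) (θf ωf : ℝ → ℝ)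
    (htraj : Traj ε β ρ U V a ξ θf)
    (hωf : OmEq ε β ω V a ξ ωf)
    (ψ : ℝ → Esp N → ℂ)
    (hψ : ContDiff ℝ 1 fun q : ℝ × Esp N => ψ q.1 q.2)
    (hψx : ∀ t, ContDiff ℝ 2 (ψ t))
    (hNLS : ∀ t x, NLSeq ε α f V ψ t x) :
    ∀ (t : ℝ) (x : Esp N),
      deriv (fun s => wtil ε γ β U a ξ θf ωf ψ s x) t
        = Complex.I / (ε : ℂ)
              * ((ε ^ β * (inner ℝ x (vfun ε β ρ U V a t) : ℝ) - RVfun ε β V a t x : ℝ) : ℂ)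
              * (((U x : ℝ) : ℂ) + wtil ε γ β U a ξ θf ωf ψ t x)
          + Complex.I * ((ε ^ (1 - 2 * β) : ℝ) : ℂ)
              * (lapC (wtil ε γ β U a ξ θf ωf ψ t) x
                + ((ω : ℝ) : ℂ) * wtil ε γ β U a ξ θf ωf ψ t x
                - ((2 * deriv f (U x ^ 2) * U x ^ 2 + f (U x ^ 2) : ℝ) : ℂ)
                    * (((wtil ε γ β U a ξ θf ωf ψ t x).re : ℝ) : ℂ)
                - Complex.I * ((f (U x ^ 2) : ℝ) : ℂ)
                    * (((wtil ε γ β U a ξ θf ωf ψ t x).im : ℝ) : ℂ)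
                - RFfun f U (wtil ε γ β U a ξ θf ωf ψ t) x) := by
  intro t x
  obtain ⟨hF, ha, hξ, hθ⟩ := htraj
  have hW : ‖(U x : ℂ) + wtil ε γ β U a ξ θf ωf ψ t x‖
      = ε ^ (-γ) * ‖ψ t (a t + ε ^ β • x)‖ := by
    rw [wtil_eq hε, add_sub_cancel, modulate, norm_mul, norm_mul, norm_planeWave, one_mul,
      Complex.norm_real, Real.norm_of_nonneg (Real.rpow_nonneg hε.le _)]
  have hεC : (ε : ℂ) ≠ 0 := by exact_mod_cast hε.ne'
  have hBC : ((ε ^ β : ℝ) : ℂ) ≠ 0 := by exact_mod_cast (Real.rpow_pos_of_pos hε β).ne'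
  have hΔU : lapR U x = f (U x ^ 2) * U x - ω * U x := by linarith [hell x]
  simp only [RFfun, RVfun]
  rw [(hasDerivAt_wtil hε γ β U (ha t) (hξ t) (hθ t) (hωf.2 t)
      (hψ.differentiable one_ne_zero _)).deriv, deriv_eq_of_NLSeq hε hβ hfhom (hNLS t _) hW,
    lapC_wtil hε γ β hU a ξ θf ωf (hψx t) x, vfun_eq (hF t) hρ hρ0.ne', wtil_eq hε, hΔU]
  simp only [modulate, inner_sub_right, real_inner_smul_right, inner_neg_right,
    rpow_sub_two_mul hε, Real.rpow_one, Real.rpow_two, real_inner_comm x]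
  push_cast
  -- `i² = -1` enters only where the cross term of the Laplacian cancels the transport term.
  linear_combination (norm := skip)
    (((ε ^ (-γ) : ℝ) : ℂ) * planeWave ((-(ε ^ β / (2 * ε))) • ξ t) ((ωf t - θf t) / ε) x
      * fderiv ℝ (ψ t) (a t + ε ^ β • x) (ξ t)) * Complex.I_sq
  field_simp
  ring

/-- Proposition `der-w-tilde`: the evolution equation satisfied by `w̃`. -/
theorem wtilde_evolution
    (N : ℕ) (hN : 3 ≤ N) (ε p α β γ ω ρ : ℝ) (hε : 0 < ε)
    (hp0 : 0 < p) (hβ : β = 1 + (α - γ) * p)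
    (f : ℝ → ℝ) (hfc : ContinuousOn f (Set.Ici 0)) (hf1 : ContDiffOn ℝ 1 f (Set.Ioi 0))
    (hfhom : ∀ lam > (0:ℝ), ∀ s > (0:ℝ), f (lam * s) = lam ^ p * f s)
    (U : Esp N → ℝ) (hU : ContDiff ℝ 2 U) (hUpos : ∀ x, 0 < U x)
    (hell : ∀ x, -lapR U x + f (U x ^ 2) * U x - ω * U x = 0)
    (hρ : (∫ x, U x ^ 2) = ρ) (hρ0 : 0 < ρ)
    (V : Esp N → ℝ) (hV : ContDiff ℝ 1 V)
    (a ξ : ℝ → Esp N) (θf ωf : ℝ → ℝ)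
    (htraj : Traj ε β ρ U V a ξ θf)
    (hvint : ∀ t, Integrable fun x : Esp N =>
      U x ^ 2 • (grad V (a t + (ε ^ β : ℝ) • x) - grad V (a t)))
    (hforce : Continuous fun t => ∫ x, U x ^ 2 • grad V (a t + (ε ^ β : ℝ) • x))
    (hωf : OmEq ε β ω V a ξ ωf)
    (ψ : ℝ → Esp N → ℂ)
    (hψ : ContDiff ℝ 1 fun q : ℝ × Esp N => ψ q.1 q.2)
    (hψx : ∀ t, ContDiff ℝ 2 (ψ t))
    (hNLS : ∀ t x, NLSeq ε α f V ψ t x) :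
    ∀ (t : ℝ) (x : Esp N),
      deriv (fun s => wtil ε γ β U a ξ θf ωf ψ s x) t
        = Complex.I / (ε : ℂ)
              * ((ε ^ β * (inner ℝ x (vfun ε β ρ U V a t) : ℝ) - RVfun ε β V a t x : ℝ) : ℂ)
              * (((U x : ℝ) : ℂ) + wtil ε γ β U a ξ θf ωf ψ t x)
          + Complex.I * ((ε ^ (1 - 2 * β) : ℝ) : ℂ)
              * (lapC (wtil ε γ β U a ξ θf ωf ψ t) x
                + ((ω : ℝ) : ℂ) * wtil ε γ β U a ξ θf ωf ψ t x
                - ((2 * deriv f (U x ^ 2) * U x ^ 2 + f (U x ^ 2) : ℝ) : ℂ)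
                    * (((wtil ε γ β U a ξ θf ωf ψ t x).re : ℝ) : ℂ)
                - Complex.I * ((f (U x ^ 2) : ℝ) : ℂ)
                    * (((wtil ε γ β U a ξ θf ωf ψ t x).im : ℝ) : ℂ)
                - RFfun f U (wtil ε γ β U a ξ θf ωf ψ t) x) :=
  wtilde_evolution_general N ε p α β γ ω ρ hε hβ f hfhom U hU hell hρ hρ0 V a ξ θf ωf htraj hωf ψ hψ
    hψx hNLS

end NLS
end
end

section
/- Let N ≥ 3, ε > 0, β ∈ ℝ, v ∈ ℝ^N. Let U : ℝ^N → ℝ be a Schwartz function with ∫ U² dx = ρ, and let R : ℝ^N → ℝ be measurable with (1+|x|)|R(x)|U²(x) ∈ L¹(ℝ^N) and |R(x)|U(x)|∇U(x)| ∈ L¹(ℝ^N). Define I₁(x) := (i/ε)(ε^β x·v − R(x)) U(x). Then ω(I₁, z_{j,0}) = (1/2) ε^{β−1} ρ v_j + (1/(2ε)) ∫_{ℝ^N} R(x) ∂_j(U²)(x) dx for j = 1,…,N, and ω(I₁, z_{j,0}) = 0 for j = N+1,…,2N+1. -/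
open MeasureTheory Real Filter
open scoped BigOperators ENNReal

noncomputable section

/-! Write `I₁ = i a` with `a` real. Against the purely imaginary tangent vectors `z_{N+j,0}` and
`z_{2N+1,0}` the integrand `I₁ · conj z` is real, so the pairing vanishes. Against the real vector
`z_{j,0} = -∂_j U` the pairing is `-∫ a ∂_j U`; since `2 U ∂_j U = ∂_j (U²)`, the `x · v` part is
handled by one integration by parts, `∫ (x · v) ∂_j (U²) = -v_j ∫ U²`, while the `R` part is left
as it stands. -/

open scoped LineDeriv SchwartzMap

namespace SchwartzMap

variable {E : Type*} [NormedAddCommGroup E] [NormedSpace ℝ E] [FiniteDimensional ℝ E]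
  [MeasurableSpace E] [BorelSpace E] {μ : Measure E} [μ.IsAddHaarMeasure]

theorem integrable_clm_mul (φ : 𝓢(E, ℝ)) (L : E →L[ℝ] ℝ) :
    Integrable (fun x => L x * φ x) μ := by
  simpa [smulLeftCLM_apply L.hasTemperateGrowth] using (smulLeftCLM ℝ L φ).integrable (μ := μ)

theorem integral_clm_mul_lineDerivOp (φ : 𝓢(E, ℝ)) (L : E →L[ℝ] ℝ) (m : E) :
    ∫ x, L x * ∂_{m} φ x ∂μ = -(L m * ∫ x, φ x ∂μ) := by
  rw [← integral_const_mul]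
  simpa [L.fderiv, lineDerivOp_apply_eq_fderiv] using
    integral_mul_fderiv_eq_neg_fderiv_mul_of_integrable (μ := μ) (v := m)
      (by simpa [L.fderiv] using φ.integrable.const_mul (L m))
      ((∂_{m} φ).integrable_clm_mul L) (φ.integrable_clm_mul L)
      (fun x _ => L.differentiableAt) (fun x _ => φ.differentiableAt)

end SchwartzMap

namespace NLS

variable {N : ℕ}

theorem pd_sq (j : Fin N) {g : Esp N → ℝ} {x : Esp N} (hg : DifferentiableAt ℝ g x) :
    pd j (fun y => g y ^ 2) x = 2 * g x * pd j g x := by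
  simp [pd, (hg.hasFDerivAt.pow 2).fderiv]

theorem abs_pd_le_norm_grad (j : Fin N) (g : Esp N → ℝ) (x : Esp N) :
    |pd j g x| ≤ ‖grad g x‖ := by
  simpa [grad] using PiLp.norm_apply_le (grad g x) j

theorem integrable_mul_pd_sq (j : Fin N) {g R : Esp N → ℝ} (hg : ContDiff ℝ 1 g)
    (hR : Measurable R) (h : Integrable fun x => |R x| * g x * ‖grad g x‖) :
    Integrable fun x => R x * pd j (fun y => g y ^ 2) x := by
  refine (h.norm.const_mul 2).mono' ?_ (Eventually.of_forall fun x => ?_)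
  · exact hR.aestronglyMeasurable.mul
      (((hg.pow 2).continuous_fderiv one_ne_zero).clm_apply continuous_const).aestronglyMeasurable
  · rw [pd_sq j (hg.differentiable one_ne_zero x)]
    simp only [Real.norm_eq_abs, abs_mul, abs_abs, abs_norm, abs_two]
    calc |R x| * (2 * |g x| * |pd j g x|) = 2 * (|R x| * |g x| * |pd j g x|) := by ring
      _ ≤ 2 * (|R x| * |g x| * ‖grad g x‖) := by gcongr; exact abs_pd_le_norm_grad j g x

theorem coe_smulLeftCLM_self (U : 𝓢(Esp N, ℝ)) :
    ⇑(SchwartzMap.smulLeftCLM ℝ ⇑U U) = fun y => U y ^ 2 := by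
  ext y
  simp [SchwartzMap.smulLeftCLM_apply U.hasTemperateGrowth, sq]

theorem pd_sq_eq_lineDerivOp (j : Fin N) (U : 𝓢(Esp N, ℝ)) :
    pd j (fun y => U y ^ 2)
      = ⇑(∂_{EuclideanSpace.single j (1 : ℝ)} (SchwartzMap.smulLeftCLM ℝ ⇑U U) :
          𝓢(Esp N, ℝ)) := by
  ext x
  rw [SchwartzMap.lineDerivOp_apply_eq_fderiv, coe_smulLeftCLM_self, pd]

theorem integrable_inner_mul_pd_sq (j : Fin N) (v : Esp N) (U : 𝓢(Esp N, ℝ)) :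
    Integrable fun x => inner ℝ x v * pd j (fun y => U y ^ 2) x := by
  simpa [pd_sq_eq_lineDerivOp, real_inner_comm] using
    SchwartzMap.integrable_clm_mul (μ := volume) _ (innerSL ℝ v)

theorem integral_inner_mul_pd_sq (j : Fin N) (v : Esp N) (U : 𝓢(Esp N, ℝ)) :
    ∫ x, inner ℝ x v * pd j (fun y => U y ^ 2) x = -(v j * ∫ x, U x ^ 2) := by
  have := SchwartzMap.integral_clm_mul_lineDerivOp (μ := volume)
    (SchwartzMap.smulLeftCLM ℝ ⇑U U) (innerSL ℝ v) (EuclideanSpace.single j 1)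
  rw [pd_sq_eq_lineDerivOp]
  simpa [real_inner_comm, EuclideanSpace.inner_single_right, coe_smulLeftCLM_self] using this

theorem symp_I_mul_ofReal_ofReal (a b : Esp N → ℝ) :
    symp (fun x => Complex.I * (a x : ℂ)) (fun x => (b x : ℂ)) = ∫ x, a x * b x := by
  have h : ∀ x, Complex.I * (a x : ℂ) * (starRingEnd ℂ) (b x : ℂ)
      = Complex.I * ((a x * b x : ℝ) : ℂ) := by
    intro x
    rw [Complex.conj_ofReal]
    push_cast
    ring
  simp only [symp, h, integral_const_mul, integral_complex_ofReal, Complex.mul_im, Complex.I_re,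
    Complex.I_im, Complex.ofReal_re, Complex.ofReal_im]
  ring

theorem symp_I_mul_ofReal_I_mul_ofReal (a b : Esp N → ℝ) :
    symp (fun x => Complex.I * (a x : ℂ)) (fun x => Complex.I * (b x : ℂ)) = 0 := by
  have h : ∀ x, Complex.I * (a x : ℂ) * (starRingEnd ℂ) (Complex.I * (b x : ℂ))
      = ((a x * b x : ℝ) : ℂ) := by
    intro x
    rw [map_mul, Complex.conj_I, Complex.conj_ofReal]
    push_cast
    linear_combination (-(a x * b x : ℂ)) * Complex.I_mul_I
  simp only [symp, h, integral_complex_ofReal, Complex.ofReal_im]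

theorem lemma_I1_general
    (N : ℕ) (ε β ρ : ℝ) (hε : 0 < ε) (v : Esp N)
    (U : SchwartzMap (Esp N) ℝ) (hρ : (∫ x, U x ^ 2) = ρ)
    (R : Esp N → ℝ) (hR : Measurable R)
    (h2 : Integrable fun x : Esp N => |R x| * U x * ‖grad ⇑U x‖) :
    (∀ j : Fin N,
        symp (fun x : Esp N =>
            Complex.I / (ε : ℂ) * ((ε ^ β * (inner ℝ x v : ℝ) - R x : ℝ) : ℂ) * ((U x : ℝ) : ℂ))
          (zA0 ⇑U j)
        = 1 / 2 * ε ^ (β - 1) * ρ * v j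
          + 1 / (2 * ε) * ∫ x, R x * pd j (fun y => U y ^ 2) x) ∧
    (∀ j : Fin N,
        symp (fun x : Esp N =>
            Complex.I / (ε : ℂ) * ((ε ^ β * (inner ℝ x v : ℝ) - R x : ℝ) : ℂ) * ((U x : ℝ) : ℂ))
          (zXi0 ⇑U j) = 0) ∧
    symp (fun x : Esp N =>
        Complex.I / (ε : ℂ) * ((ε ^ β * (inner ℝ x v : ℝ) - R x : ℝ) : ℂ) * ((U x : ℝ) : ℂ))
      (zTh0 ⇑U) = 0 := by
  set a : Esp N → ℝ := fun x => ε⁻¹ * ((ε ^ β * inner ℝ x v - R x) * U x)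
  have hI₁ : (fun x : Esp N =>
      Complex.I / (ε : ℂ) * ((ε ^ β * (inner ℝ x v : ℝ) - R x : ℝ) : ℂ) * ((U x : ℝ) : ℂ))
      = fun x => Complex.I * (a x : ℂ) := by
    ext x
    simp only [a]
    push_cast
    ring
  refine ⟨fun j => ?_, fun j => ?_, ?_⟩
  · have hz : zA0 ⇑U j = fun x => ((-pd j U x : ℝ) : ℂ) := by ext x; simp [zA0]
    have hsplit : ∀ x, a x * -pd j U x
        = -(ε ^ (β - 1) / 2) * (inner ℝ x v * pd j (fun y => U y ^ 2) x)
          + 1 / (2 * ε) * (R x * pd j (fun y => U y ^ 2) x) := by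
      intro x
      simp only [a]
      rw [pd_sq j U.differentiableAt, Real.rpow_sub_one hε.ne']
      field_simp
      ring
    rw [hI₁, hz, symp_I_mul_ofReal_ofReal, integral_congr_ae (Eventually.of_forall hsplit),
      integral_add ((integrable_inner_mul_pd_sq j v U).const_mul _)
        ((integrable_mul_pd_sq j (U.smooth 1) hR h2).const_mul _),
      integral_const_mul, integral_const_mul, integral_inner_mul_pd_sq, hρ]
    ring
  · have hz : zXi0 ⇑U j = fun x => Complex.I * ((x j * U x / 2 : ℝ) : ℂ) := by
      ext x
      simp only [zXi0]
      push_cast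
      ring
    rw [hI₁, hz, symp_I_mul_ofReal_I_mul_ofReal]
  · exact hI₁ ▸ symp_I_mul_ofReal_I_mul_ofReal a U

/-- Lemma `i1`: pairings of `I₁` with the rescaled tangent vectors. -/
theorem lemma_I1
    (N : ℕ) (hN : 3 ≤ N) (ε β ρ : ℝ) (hε : 0 < ε) (v : Esp N)
    (U : SchwartzMap (Esp N) ℝ) (hρ : (∫ x, U x ^ 2) = ρ)
    (R : Esp N → ℝ) (hR : Measurable R)
    (h1 : Integrable fun x : Esp N => (1 + ‖x‖) * |R x| * U x ^ 2)
    (h2 : Integrable fun x : Esp N => |R x| * U x * ‖grad ⇑U x‖) :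
    (∀ j : Fin N,
        symp (fun x : Esp N =>
            Complex.I / (ε : ℂ) * ((ε ^ β * (inner ℝ x v : ℝ) - R x : ℝ) : ℂ) * ((U x : ℝ) : ℂ))
          (zA0 ⇑U j)
        = 1 / 2 * ε ^ (β - 1) * ρ * v j
          + 1 / (2 * ε) * ∫ x, R x * pd j (fun y => U y ^ 2) x) ∧
    (∀ j : Fin N,
        symp (fun x : Esp N =>
            Complex.I / (ε : ℂ) * ((ε ^ β * (inner ℝ x v : ℝ) - R x : ℝ) : ℂ) * ((U x : ℝ) : ℂ))
          (zXi0 ⇑U j) = 0) ∧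
    symp (fun x : Esp N =>
        Complex.I / (ε : ℂ) * ((ε ^ β * (inner ℝ x v : ℝ) - R x : ℝ) : ℂ) * ((U x : ℝ) : ℂ))
      (zTh0 ⇑U) = 0 :=
  lemma_I1_general N ε β ρ hε v U hρ R hR h2
end NLS
end
end

section
/- Let N ≥ 3, ε > 0, β, ω ∈ ℝ. Let f : (0,∞) → ℝ be C¹ and let U : ℝ^N → ℝ be a positive Schwartz function solving −ΔU + f(U²)U − ωU = 0 on ℝ^N, such that f(U²) and f'(U²)U² are bounded functions. Let w̃ : ℝ^N → ℂ be a Schwartz function, and define I₃(x) := i ε^{1−2β} [ Δw̃(x) + ω w̃(x) − (2 f'(U²(x)) U²(x) + f(U²(x))) Re(w̃(x)) − i f(U²(x)) Im(w̃(x)) ]. Then ω(I₃, z_{j,0}) = 0 for j = 1,…,N, ω(I₃, z_{N+j,0}) = −ε^{1−2β} ω(w̃, z_{j,0}) for j = 1,…,N, and ω(I₃, z_{2N+1,0}) = 0. -/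
open MeasureTheory Real Filter
open scoped BigOperators ENNReal

noncomputable section

/-!
Write `w̃ = u + i v`, `c = ε^{1-2β}`, `L₊ = -Δ - ω + 2f'(U²)U² + f(U²)` and `L₋ = -Δ - ω + f(U²)`.
Then `I₃ = c (L₋ v - i L₊ u)`, so for a real Schwartz function `φ` and `ζ ∈ ℂ`, Green's identity
for Schwartz functions gives `ω(I₃, ζ φ) = -c (Re ζ ⟨u, L₊ φ⟩ + Im ζ ⟨v, L₋ φ⟩)`. The three
identities are then the kernel relations `L₊ ∂_j U = 0` (the derivative of the elliptic equation),
`L₋ U = 0` (the equation itself) and `L₋ (x_j U) = -2 ∂_j U`.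
-/

open scoped Laplacian LineDeriv SchwartzMap

namespace SchwartzMap

variable {E F : Type*} [NormedAddCommGroup E] [NormedAddCommGroup F] [NormedSpace ℝ F]

theorem lineDerivOp_comm [NormedSpace ℝ E] (g : 𝓢(E, F)) (v w : E) :
    ∂_{v} (∂_{w} g) = ∂_{w} (∂_{v} g) := by
  ext x
  have hsymm := (g.smooth ⊤).contDiffAt.isSymmSndFDerivAt (x := x) (by rw [minSmoothness_of_isRCLikeNormedField]; decide) v w
  have hd : DifferentiableAt ℝ (fderiv ℝ g) x := (fderivCLM ℝ E F g).differentiableAt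
  have hcoe : ∀ u, ((∂_{u} g : 𝓢(E, F)) : E → F) = fun y => fderiv ℝ g y u :=
    fun u => funext (lineDerivOp_apply_eq_fderiv u g)
  rw [lineDerivOp_apply_eq_fderiv, lineDerivOp_apply_eq_fderiv, hcoe, hcoe,
    fderiv_clm_apply hd (differentiableAt_const _), fderiv_clm_apply hd (differentiableAt_const _)]
  simpa using hsymm

theorem laplacian_lineDerivOp [InnerProductSpace ℝ E] [FiniteDimensional ℝ E] (g : 𝓢(E, F))
    (v : E) : Δ (∂_{v} g) = ∂_{v} (Δ g) := by
  simp only [laplacian_eq_sum (stdOrthonormalBasis ℝ E), LineDeriv.lineDerivOp_sum]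
  refine Finset.sum_congr rfl fun i _ => ?_
  rw [lineDerivOp_comm g, lineDerivOp_comm (∂_{_} g)]

end SchwartzMap

theorem hasDerivAt_mul_comp_sq {f : ℝ → ℝ} {s : ℝ} (hf : DifferentiableAt ℝ f (s ^ 2)) :
    HasDerivAt (fun t => f (t ^ 2) * t) (2 * deriv f (s ^ 2) * s ^ 2 + f (s ^ 2)) s := by
  have hsq : HasDerivAt (fun t : ℝ => t ^ 2) (2 * s) s := by simpa using hasDerivAt_pow 2 s
  have h := (HasDerivAt.comp (h := fun t => t ^ 2) s hf.hasDerivAt hsq).fun_mul (hasDerivAt_id' s)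
  exact h.congr_deriv (by simp only [Function.comp_apply]; ring)

namespace NLS

variable {N : ℕ}

theorem pd_eq_lineDerivOp (j : Fin N) (g : 𝓢(Esp N, ℝ)) :
    pd j g = ⇑(∂_{EuclideanSpace.single j (1 : ℝ)} g : 𝓢(Esp N, ℝ)) := rfl

theorem lapR_eq_laplacian (g : 𝓢(Esp N, ℝ)) : lapR g = ⇑(Δ g : 𝓢(Esp N, ℝ)) := by
  ext x
  simp [lapR, SchwartzMap.laplacian_eq_sum (EuclideanSpace.basisFun (Fin N) ℝ), pd_eq_lineDerivOp]

theorem lapC_eq_laplacian (g : 𝓢(Esp N, ℂ)) : lapC g = ⇑(Δ g : 𝓢(Esp N, ℂ)) := by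
  ext x
  simp only [lapC, SchwartzMap.laplacian_eq_sum (EuclideanSpace.basisFun (Fin N) ℝ),
    EuclideanSpace.basisFun_apply, sum_apply]
  rfl

section CoordMul

variable {F : Type*} [NormedAddCommGroup F] [NormedSpace ℝ F]

theorem hasTemperateGrowth_coord (j : Fin N) : (fun x : Esp N => x j).HasTemperateGrowth :=
  (EuclideanSpace.proj (𝕜 := ℝ) j).hasTemperateGrowth

def coordMul (j : Fin N) : 𝓢(Esp N, F) →L[ℝ] 𝓢(Esp N, F) :=
  SchwartzMap.smulLeftCLM F (fun x : Esp N => x j)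

theorem coordMul_apply (j : Fin N) (g : 𝓢(Esp N, F)) (x : Esp N) :
    coordMul j g x = x j • g x :=
  SchwartzMap.smulLeftCLM_apply_apply (hasTemperateGrowth_coord j) g x

theorem lineDerivOp_coordMul (j : Fin N) (g : 𝓢(Esp N, F)) (v : Esp N) :
    ∂_{v} (coordMul j g) = coordMul j (∂_{v} g) + v j • g := by
  ext x
  have hcoe : ⇑(coordMul j g) = fun y => y j • g y := funext (coordMul_apply j g)
  have hc : HasFDerivAt (fun y : Esp N => y j) (EuclideanSpace.proj (𝕜 := ℝ) j) x :=
    (EuclideanSpace.proj (𝕜 := ℝ) j).hasFDerivAt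
  rw [SchwartzMap.lineDerivOp_apply_eq_fderiv, hcoe,
    fderiv_fun_smul hc.differentiableAt g.differentiableAt, hc.fderiv]
  simp [coordMul_apply, SchwartzMap.lineDerivOp_apply_eq_fderiv]

theorem laplacian_coordMul (j : Fin N) (g : 𝓢(Esp N, F)) :
    Δ (coordMul j g) = coordMul j (Δ g) + (2 : ℝ) • ∂_{EuclideanSpace.single j (1 : ℝ)} g := by
  simp only [SchwartzMap.laplacian_eq_sum (EuclideanSpace.basisFun (Fin N) ℝ),
    EuclideanSpace.basisFun_apply, lineDerivOp_coordMul, map_sum, LineDeriv.lineDerivOp_add,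
    LineDeriv.lineDerivOp_smul, Finset.sum_add_distrib, PiLp.single_apply]
  simp only [ite_smul, one_smul, zero_smul, Finset.sum_ite_eq, Finset.mem_univ, if_true]
  rw [add_assoc, two_smul]

end CoordMul

section EllipticProfile

variable {ω : ℝ} {f : ℝ → ℝ} {U : 𝓢(Esp N, ℝ)}

theorem laplacian_eq_of_elliptic (hell : ∀ x, -lapR ⇑U x + f (U x ^ 2) * U x - ω * U x = 0)
    (x : Esp N) : Δ U x = (f (U x ^ 2) - ω) * U x := by
  have h := hell x
  rw [lapR_eq_laplacian] at h
  linarith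

theorem laplacian_lineDerivOp_eq_of_elliptic (hf : ContDiffOn ℝ 1 f (Set.Ioi 0))
    (hUpos : ∀ x, 0 < U x) (hell : ∀ x, -lapR ⇑U x + f (U x ^ 2) * U x - ω * U x = 0)
    (v x : Esp N) :
    Δ (∂_{v} U) x = (2 * deriv f (U x ^ 2) * U x ^ 2 + f (U x ^ 2) - ω) * ∂_{v} U x := by
  have hΔU : ⇑(Δ U : 𝓢(Esp N, ℝ)) = fun y => f (U y ^ 2) * U y - ω * U y :=
    funext fun y => by rw [laplacian_eq_of_elliptic hell]; ring
  have hdf : DifferentiableAt ℝ f (U x ^ 2) :=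
    (hf.differentiableOn one_ne_zero).differentiableAt
      (isOpen_Ioi.mem_nhds (pow_pos (hUpos x) 2))
  have hderiv : HasFDerivAt (fun y => f (U y ^ 2) * U y - ω * U y)
      ((2 * deriv f (U x ^ 2) * U x ^ 2 + f (U x ^ 2)) • fderiv ℝ U x - ω • fderiv ℝ U x) x :=
    ((hasDerivAt_mul_comp_sq hdf).comp_hasFDerivAt x (U.hasFDerivAt x)).sub
      ((U.hasFDerivAt x).const_mul ω)
  rw [SchwartzMap.laplacian_lineDerivOp, SchwartzMap.lineDerivOp_apply_eq_fderiv, hΔU,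
    SchwartzMap.lineDerivOp_apply_eq_fderiv, hderiv.fderiv]
  simp only [sub_apply, smul_apply, smul_eq_mul]
  ring

theorem laplacian_coordMul_eq_of_elliptic
    (hell : ∀ x, -lapR ⇑U x + f (U x ^ 2) * U x - ω * U x = 0) (j : Fin N) (x : Esp N) :
    Δ (coordMul j U) x
      = (f (U x ^ 2) - ω) * coordMul j U x + 2 * ∂_{EuclideanSpace.single j (1 : ℝ)} U x := by
  rw [laplacian_coordMul, add_apply, coordMul_apply, coordMul_apply,
    laplacian_eq_of_elliptic hell, smul_apply, smul_eq_mul, smul_eq_mul]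
  ring

end EllipticProfile

theorem integrable_mul_ofReal_of_bounded {g : Esp N → ℂ} (hg : AEStronglyMeasurable g)
    {C : ℝ} (hC : ∀ x, ‖g x‖ ≤ C) (φ : 𝓢(Esp N, ℝ)) :
    Integrable fun x => g x * (φ x : ℂ) :=
  φ.integrable.ofReal.bdd_mul hg (ae_of_all _ hC)

theorem integrable_schwartz_mul_ofReal (g : 𝓢(Esp N, ℂ)) (φ : 𝓢(Esp N, ℝ)) :
    Integrable fun x => g x * (φ x : ℂ) :=
  integrable_mul_ofReal_of_bounded g.continuous.aestronglyMeasurable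
    (g.norm_le_seminorm ℝ) φ

theorem im_integral_schwartz_mul_ofReal (w : 𝓢(Esp N, ℂ)) (φ : 𝓢(Esp N, ℝ)) :
    (∫ x, w x * (φ x : ℂ)).im = ∫ x, (w x).im * φ x := by
  rw [← Complex.imCLM_apply, ← Complex.imCLM.integral_comp_comm
    (integrable_schwartz_mul_ofReal w φ)]
  simp

/-- The Hessian at `U` of the energy is `linearizedOp ω A B` with `A = 2f'(U²)U² + f(U²)` and
`B = f(U²)`. -/
def linearizedOp (ω : ℝ) (A B : Esp N → ℝ) (w : Esp N → ℂ) (x : Esp N) : ℂ :=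
  lapC w x + ((ω : ℝ) : ℂ) * w x - ((A x : ℝ) : ℂ) * (((w x).re : ℝ) : ℂ)
    - Complex.I * ((B x : ℝ) : ℂ) * (((w x).im : ℝ) : ℂ)

def potentialPart (ω a b : ℝ) (z : ℂ) : ℂ :=
  (ω : ℂ) * z - (a : ℂ) * (z.re : ℂ) - Complex.I * (b : ℂ) * (z.im : ℂ)

theorem norm_potentialPart_le (ω a b : ℝ) (z : ℂ) :
    ‖potentialPart ω a b z‖ ≤ (|ω| + |a| + |b|) * ‖z‖ := by
  have hre : ‖(a : ℂ) * (z.re : ℂ)‖ ≤ |a| * ‖z‖ := by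
    rw [norm_mul, Complex.norm_real, Complex.norm_real]
    exact mul_le_mul_of_nonneg_left (Complex.abs_re_le_norm z) (abs_nonneg a)
  have him : ‖Complex.I * (b : ℂ) * (z.im : ℂ)‖ ≤ |b| * ‖z‖ := by
    rw [norm_mul, norm_mul, Complex.norm_I, one_mul, Complex.norm_real, Complex.norm_real]
    exact mul_le_mul_of_nonneg_left (Complex.abs_im_le_norm z) (abs_nonneg b)
  have hω : ‖(ω : ℂ) * z‖ = |ω| * ‖z‖ := by rw [norm_mul, Complex.norm_real, Real.norm_eq_abs]
  calc _ ≤ ‖(ω : ℂ) * z‖ + ‖(a : ℂ) * (z.re : ℂ)‖ + ‖Complex.I * (b : ℂ) * (z.im : ℂ)‖ :=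
        norm_sub_le_of_le (norm_sub_le _ _) le_rfl
    _ ≤ _ := by linarith

section LinearizedOp

variable (ω : ℝ) {A B : Esp N → ℝ} {CA CB : ℝ} (w : 𝓢(Esp N, ℂ)) (φ : 𝓢(Esp N, ℝ))

theorem integrable_potentialPart_mul (hA : Measurable A) (hCA : ∀ x, |A x| ≤ CA)
    (hB : Measurable B) (hCB : ∀ x, |B x| ≤ CB) :
    Integrable fun x => potentialPart ω (A x) (B x) (w x) * (φ x : ℂ) := by
  refine integrable_mul_ofReal_of_bounded (by unfold potentialPart; fun_prop)
    (C := (|ω| + CA + CB) * SchwartzMap.seminorm ℝ 0 0 w) (fun x => ?_) φ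
  refine (norm_potentialPart_le ω (A x) (B x) (w x)).trans ?_
  gcongr
  · linarith [(abs_nonneg (A x)).trans (hCA x), (abs_nonneg (B x)).trans (hCB x), abs_nonneg ω]
  · exact hCA x
  · exact hCB x
  · exact w.norm_le_seminorm ℝ x

theorem integral_linearizedOp_mul (hA : Measurable A) (hCA : ∀ x, |A x| ≤ CA)
    (hB : Measurable B) (hCB : ∀ x, |B x| ≤ CB) :
    ∫ x, linearizedOp ω A B w x * φ x
      = ∫ x, (w x * (Δ φ x : ℂ) + potentialPart ω (A x) (B x) (w x) * (φ x : ℂ)) := by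
  have hparts : ∫ x, Δ w x * (φ x : ℂ) = ∫ x, w x * (Δ φ x : ℂ) := by
    simpa [Complex.real_smul, mul_comm] using
      SchwartzMap.integral_smul_laplacian_right_eq_left (μ := volume) φ w
  have hP := integrable_potentialPart_mul ω w φ hA hCA hB hCB
  rw [integral_add (integrable_schwartz_mul_ofReal w (Δ φ)) hP, ← hparts,
    ← integral_add (integrable_schwartz_mul_ofReal (Δ w) φ) hP]
  congr 1; funext x
  simp only [linearizedOp, potentialPart, lapC_eq_laplacian]
  ring

theorem re_integral_linearizedOp_mul (hA : Measurable A) (hCA : ∀ x, |A x| ≤ CA)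
    (hB : Measurable B) (hCB : ∀ x, |B x| ≤ CB) :
    (∫ x, linearizedOp ω A B w x * φ x).re = ∫ x, (w x).re * (Δ φ x + (ω - A x) * φ x) := by
  rw [integral_linearizedOp_mul ω w φ hA hCA hB hCB, ← Complex.reCLM_apply,
    ← Complex.reCLM.integral_comp_comm ((integrable_schwartz_mul_ofReal w (Δ φ)).fun_add
      (integrable_potentialPart_mul ω w φ hA hCA hB hCB))]
  congr 1; funext x
  simp only [potentialPart, Complex.reCLM_apply, Complex.add_re, Complex.sub_re, Complex.mul_re,
    Complex.mul_im, Complex.ofReal_re, Complex.ofReal_im, Complex.I_re, Complex.I_im]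
  ring

theorem im_integral_linearizedOp_mul (hA : Measurable A) (hCA : ∀ x, |A x| ≤ CA)
    (hB : Measurable B) (hCB : ∀ x, |B x| ≤ CB) :
    (∫ x, linearizedOp ω A B w x * φ x).im = ∫ x, (w x).im * (Δ φ x + (ω - B x) * φ x) := by
  rw [integral_linearizedOp_mul ω w φ hA hCA hB hCB, ← Complex.imCLM_apply,
    ← Complex.imCLM.integral_comp_comm ((integrable_schwartz_mul_ofReal w (Δ φ)).fun_add
      (integrable_potentialPart_mul ω w φ hA hCA hB hCB))]
  congr 1; funext x
  simp only [potentialPart, Complex.imCLM_apply, Complex.add_im, Complex.sub_im, Complex.mul_re,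
    Complex.mul_im, Complex.ofReal_re, Complex.ofReal_im, Complex.I_re, Complex.I_im]
  ring

end LinearizedOp

theorem symp_mul_ofReal (F : Esp N → ℂ) (ζ : ℂ) (φ : Esp N → ℝ) :
    symp F (fun x => ζ * φ x) = (starRingEnd ℂ ζ * ∫ x, F x * φ x).im := by
  rw [symp, ← integral_const_mul]
  congr 2; funext x
  simp only [map_mul, Complex.conj_ofReal]
  ring

theorem symp_linearizedOp (c ω : ℝ) {A B : Esp N → ℝ} {CA CB : ℝ} (hA : Measurable A)
    (hCA : ∀ x, |A x| ≤ CA) (hB : Measurable B) (hCB : ∀ x, |B x| ≤ CB) (w : 𝓢(Esp N, ℂ))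
    (ζ : ℂ) (φ : 𝓢(Esp N, ℝ)) :
    symp (fun x => Complex.I * (c : ℂ) * linearizedOp ω A B w x) (fun x => ζ * φ x)
      = c * (ζ.re * (∫ x, (w x).re * (Δ φ x + (ω - A x) * φ x))
          + ζ.im * ∫ x, (w x).im * (Δ φ x + (ω - B x) * φ x)) := by
  simp_rw [symp_mul_ofReal, mul_assoc, integral_const_mul]
  rw [← re_integral_linearizedOp_mul ω w φ hA hCA hB hCB,
    ← im_integral_linearizedOp_mul ω w φ hA hCA hB hCB]
  simp only [Complex.mul_im, Complex.mul_re, Complex.conj_re, Complex.conj_im, Complex.I_re,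
    Complex.I_im, Complex.ofReal_re, Complex.ofReal_im]
  ring

theorem zA0_eq (U : 𝓢(Esp N, ℝ)) (j : Fin N) :
    zA0 ⇑U j = fun x => (-1 : ℂ) * ((∂_{EuclideanSpace.single j (1 : ℝ)} U x : ℝ) : ℂ) := by
  ext x; simp [zA0, pd_eq_lineDerivOp]

theorem zXi0_eq (U : 𝓢(Esp N, ℝ)) (j : Fin N) :
    zXi0 ⇑U j = fun x => Complex.I / 2 * ((coordMul j U x : ℝ) : ℂ) := by
  ext x; simp [zXi0, coordMul_apply, mul_assoc]

theorem lemma_I3_general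
    (N : ℕ) (ε β ω : ℝ)
    (f : ℝ → ℝ) (hf : ContDiffOn ℝ 1 f (Set.Ioi 0))
    (U : SchwartzMap (Esp N) ℝ) (hUpos : ∀ x, 0 < U x)
    (hell : ∀ x, -lapR ⇑U x + f (U x ^ 2) * U x - ω * U x = 0)
    (hb : ∃ M, ∀ x, |f (U x ^ 2)| ≤ M ∧ |deriv f (U x ^ 2) * U x ^ 2| ≤ M)
    (w : SchwartzMap (Esp N) ℂ) :
    (∀ j : Fin N,
        symp (fun x : Esp N =>
            Complex.I * ((ε ^ (1 - 2 * β) : ℝ) : ℂ)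
              * (lapC (⇑w) x + ((ω : ℝ) : ℂ) * w x
                - ((2 * deriv f (U x ^ 2) * U x ^ 2 + f (U x ^ 2) : ℝ) : ℂ)
                    * (((w x).re : ℝ) : ℂ)
                - Complex.I * ((f (U x ^ 2) : ℝ) : ℂ) * (((w x).im : ℝ) : ℂ)))
          (zA0 ⇑U j) = 0) ∧
    (∀ j : Fin N,
        symp (fun x : Esp N =>
            Complex.I * ((ε ^ (1 - 2 * β) : ℝ) : ℂ)
              * (lapC (⇑w) x + ((ω : ℝ) : ℂ) * w x
                - ((2 * deriv f (U x ^ 2) * U x ^ 2 + f (U x ^ 2) : ℝ) : ℂ)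
                    * (((w x).re : ℝ) : ℂ)
                - Complex.I * ((f (U x ^ 2) : ℝ) : ℂ) * (((w x).im : ℝ) : ℂ)))
          (zXi0 ⇑U j) = -(ε ^ (1 - 2 * β)) * symp (⇑w) (zA0 ⇑U j)) ∧
    symp (fun x : Esp N =>
        Complex.I * ((ε ^ (1 - 2 * β) : ℝ) : ℂ)
          * (lapC (⇑w) x + ((ω : ℝ) : ℂ) * w x
            - ((2 * deriv f (U x ^ 2) * U x ^ 2 + f (U x ^ 2) : ℝ) : ℂ)
                * (((w x).re : ℝ) : ℂ)
            - Complex.I * ((f (U x ^ 2) : ℝ) : ℂ) * (((w x).im : ℝ) : ℂ)))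
      (zTh0 ⇑U) = 0 := by
  obtain ⟨M, hM⟩ := hb
  have hB : Continuous fun x => f (U x ^ 2) :=
    hf.continuousOn.comp_continuous (U.continuous.pow 2) fun x => pow_pos (hUpos x) 2
  have hA : Measurable fun x => 2 * deriv f (U x ^ 2) * U x ^ 2 + f (U x ^ 2) :=
    (((measurable_deriv f).comp (U.continuous.pow 2).measurable).const_mul 2).mul
      (U.continuous.pow 2).measurable |>.add hB.measurable
  have hCA : ∀ x, |2 * deriv f (U x ^ 2) * U x ^ 2 + f (U x ^ 2)| ≤ 3 * M := fun x =>
    (abs_add_le _ _).trans (by rw [mul_assoc, abs_mul, abs_two]; linarith [hM x])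
  have pairing := symp_linearizedOp (ε ^ (1 - 2 * β)) ω hA hCA hB.measurable (fun x => (hM x).1) w
  refine ⟨fun j => ?_, fun j => ?_, ?_⟩
  · rw [zA0_eq]
    refine (pairing _ _).trans ?_
    simp [laplacian_lineDerivOp_eq_of_elliptic hf hUpos hell, ← add_mul]
  · rw [zXi0_eq]
    refine (pairing _ _).trans ?_
    rw [zA0_eq, symp_mul_ofReal, map_neg, map_one, neg_one_mul, Complex.neg_im,
      im_integral_schwartz_mul_ofReal]
    have hker x : Δ (coordMul j U) x + (ω - f (U x ^ 2)) * coordMul j U x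
        = 2 * ∂_{EuclideanSpace.single j (1 : ℝ)} U x := by
      rw [laplacian_coordMul_eq_of_elliptic hell]; ring
    simp_rw [hker, mul_left_comm _ (2 : ℝ), integral_const_mul]
    simp
  · refine (pairing _ _).trans ?_
    simp [laplacian_eq_of_elliptic hell, ← add_mul]

/-- Lemma `i3`: pairings of `I₃` (the linearized operator term) with the
rescaled tangent vectors. -/
theorem lemma_I3
    (N : ℕ) (hN : 3 ≤ N) (ε β ω : ℝ) (hε : 0 < ε)
    (f : ℝ → ℝ) (hf : ContDiffOn ℝ 1 f (Set.Ioi 0))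
    (U : SchwartzMap (Esp N) ℝ) (hUpos : ∀ x, 0 < U x)
    (hell : ∀ x, -lapR ⇑U x + f (U x ^ 2) * U x - ω * U x = 0)
    (hb : ∃ M, ∀ x, |f (U x ^ 2)| ≤ M ∧ |deriv f (U x ^ 2) * U x ^ 2| ≤ M)
    (w : SchwartzMap (Esp N) ℂ) :
    (∀ j : Fin N,
        symp (fun x : Esp N =>
            Complex.I * ((ε ^ (1 - 2 * β) : ℝ) : ℂ)
              * (lapC (⇑w) x + ((ω : ℝ) : ℂ) * w x
                - ((2 * deriv f (U x ^ 2) * U x ^ 2 + f (U x ^ 2) : ℝ) : ℂ)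
                    * (((w x).re : ℝ) : ℂ)
                - Complex.I * ((f (U x ^ 2) : ℝ) : ℂ) * (((w x).im : ℝ) : ℂ)))
          (zA0 ⇑U j) = 0) ∧
    (∀ j : Fin N,
        symp (fun x : Esp N =>
            Complex.I * ((ε ^ (1 - 2 * β) : ℝ) : ℂ)
              * (lapC (⇑w) x + ((ω : ℝ) : ℂ) * w x
                - ((2 * deriv f (U x ^ 2) * U x ^ 2 + f (U x ^ 2) : ℝ) : ℂ)
                    * (((w x).re : ℝ) : ℂ)
                - Complex.I * ((f (U x ^ 2) : ℝ) : ℂ) * (((w x).im : ℝ) : ℂ)))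
          (zXi0 ⇑U j) = -(ε ^ (1 - 2 * β)) * symp (⇑w) (zA0 ⇑U j)) ∧
    symp (fun x : Esp N =>
        Complex.I * ((ε ^ (1 - 2 * β) : ℝ) : ℂ)
          * (lapC (⇑w) x + ((ω : ℝ) : ℂ) * w x
            - ((2 * deriv f (U x ^ 2) * U x ^ 2 + f (U x ^ 2) : ℝ) : ℂ)
                * (((w x).re : ℝ) : ℂ)
            - Complex.I * ((f (U x ^ 2) : ℝ) : ℂ) * (((w x).im : ℝ) : ℂ)))
      (zTh0 ⇑U) = 0 :=
  lemma_I3_general N ε β ω f hf U hUpos hell hb w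

end NLS
end
end
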